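/- arXiv:math/0306401 — 8 statements merged into one kernel-verified Lean document; each statement's English description precedes it below -/
import Mathlib

section
/- For every n ≥ 3 and every k with 1 ≤ k ≤ n, there exist n closed line segments in ℝ³ whose set of transversals is infinite and has exactly k connected components, i.e., there are transversals T₁, …, T_k pairwise in distinct connected components of transversals, and every transversal lies in the same connected component as some T_j. -/
/-!
The segments lie on at least three distinct lines of one ruling of the hyperboloid
`x² + y² - z² = 1`. A line meeting three lines of one ruling lies on the hyperboloid, so every
transversal is a line `M(cos θ, sin θ)` of the other ruling. Such a line meets the segment
`|z| ≤ cot (ρ / 2)` of the first-ruling line through `(-cos c, -sin c, 0)` iff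
`cos (θ - c) ≤ cos ρ`: each segment blocks an open arc of directions `θ`. Blocked arcs around `k`
equally spaced centers, together with `n - k` smaller ones inside the first of them, leave `k`
closed arcs of admissible directions. Lines of one arc are joined by rotating `θ`; a motion of
transversals from one arc to another would, by the intermediate value theorem for the polar
angle, pass through a blocked center.
-/

open Set

noncomputable section

/-- The line in ℝ³ through `a` with direction `v`. -/
def lineThrough (a v : ℝ × ℝ × ℝ) : Set (ℝ × ℝ × ℝ) :=
  {p | ∃ r : ℝ, p = a + r • v}

/-- `L` is a line in ℝ³. -/
def IsLine (L : Set (ℝ × ℝ × ℝ)) : Prop :=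
  ∃ a v : ℝ × ℝ × ℝ, v ≠ 0 ∧ L = lineThrough a v

/-- `L` is a transversal to the family of sets `s`: it is a line meeting every `s i`. -/
def IsTransversal {n : ℕ} (s : Fin n → Set (ℝ × ℝ × ℝ)) (L : Set (ℝ × ℝ × ℝ)) : Prop :=
  IsLine L ∧ ∀ i, (L ∩ s i).Nonempty

/-- Two transversals `L₀`, `L₁` to the family `s` lie in the same connected component of
transversals: one can be moved continuously to the other while remaining a transversal. -/
def SameComp {n : ℕ} (s : Fin n → Set (ℝ × ℝ × ℝ)) (L₀ L₁ : Set (ℝ × ℝ × ℝ)) : Prop :=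
  ∃ a v : ℝ → ℝ × ℝ × ℝ,
    ContinuousOn a (Icc 0 1) ∧ ContinuousOn v (Icc 0 1) ∧
    (∀ t ∈ Icc (0:ℝ) 1, v t ≠ 0) ∧
    (∀ t ∈ Icc (0:ℝ) 1, ∀ i, (lineThrough (a t) (v t) ∩ s i).Nonempty) ∧
    lineThrough (a 0) (v 0) = L₀ ∧ lineThrough (a 1) (v 1) = L₁

open Real

lemma lineThrough_smul {a v : ℝ × ℝ × ℝ} {c : ℝ} (hc : c ≠ 0) :
    lineThrough a (c • v) = lineThrough a v := by
  ext p
  constructor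
  · rintro ⟨r, rfl⟩
    exact ⟨r * c, by rw [mul_smul]⟩
  · rintro ⟨r, rfl⟩
    exact ⟨r / c, by rw [smul_smul, div_mul_cancel₀ _ hc]⟩

lemma lineThrough_add_smul (a v : ℝ × ℝ × ℝ) (s : ℝ) :
    lineThrough (a + s • v) v = lineThrough a v := by
  ext p
  constructor
  · rintro ⟨r, rfl⟩
    exact ⟨s + r, by rw [add_smul]; abel⟩
  · rintro ⟨r, rfl⟩
    exact ⟨r - s, by rw [sub_smul]; abel⟩

lemma exists_smul_eq_of_lineThrough_eq {a v b u : ℝ × ℝ × ℝ} (hv : v ≠ 0)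
    (h : lineThrough a v = lineThrough b u) : ∃ l : ℝ, l ≠ 0 ∧ v = l • u := by
  obtain ⟨r₀, hr₀⟩ : a ∈ lineThrough b u := h ▸ ⟨0, by simp⟩
  obtain ⟨r₁, hr₁⟩ : a + v ∈ lineThrough b u := h ▸ ⟨1, by simp⟩
  have hvu : v = (r₁ - r₀) • u := by
    rw [sub_smul, ← add_sub_add_left_eq_sub _ _ b, ← hr₁, ← hr₀, add_sub_cancel_left]
  refine ⟨r₁ - r₀, fun h0 => hv ?_, hvu⟩
  rw [hvu, h0, zero_smul]

lemma isLine_lineThrough {a v : ℝ × ℝ × ℝ} (hv : v ≠ 0) : IsLine (lineThrough a v) :=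
  ⟨a, v, hv, rfl⟩

def hyperboloid : Set (ℝ × ℝ × ℝ) := {p | p.1 ^ 2 + p.2.1 ^ 2 - p.2.2 ^ 2 = 1}

def rulingPoint (u : ℝ × ℝ) (t : ℝ) : ℝ × ℝ × ℝ := (u.1 - t * u.2, u.2 + t * u.1, t)

def firstRuling (u : ℝ × ℝ) : Set (ℝ × ℝ × ℝ) := lineThrough (u.1, u.2, 0) (-u.2, u.1, 1)

def secondRuling (w : ℝ × ℝ) : Set (ℝ × ℝ × ℝ) := lineThrough (w.1, w.2, 0) (w.2, -w.1, 1)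

lemma mem_firstRuling {u : ℝ × ℝ} {p : ℝ × ℝ × ℝ} :
    p ∈ firstRuling u ↔ ∃ t, p = rulingPoint u t := by
  refine exists_congr fun t => Eq.congr_right ?_
  simp only [rulingPoint, Prod.smul_mk, Prod.mk_add_mk, smul_eq_mul]
  ext <;> simp only <;> ring

lemma mem_secondRuling {w : ℝ × ℝ} {p : ℝ × ℝ × ℝ} :
    p ∈ secondRuling w ↔ ∃ r : ℝ, p = (w.1 + r * w.2, w.2 - r * w.1, r) := by
  refine exists_congr fun r => Eq.congr_right ?_
  simp only [Prod.smul_mk, Prod.mk_add_mk, smul_eq_mul]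
  ext <;> simp only <;> ring

lemma isLine_secondRuling (w : ℝ × ℝ) : IsLine (secondRuling w) :=
  isLine_lineThrough fun h => one_ne_zero (congrArg (fun p => p.2.2) h)

lemma rulingPoint_inj {u u' : ℝ × ℝ} {t t' : ℝ} (h : rulingPoint u t = rulingPoint u' t') :
    u = u' ∧ t = t' := by
  simp only [rulingPoint, Prod.mk.injEq] at h
  obtain ⟨h₁, h₂, rfl⟩ := h
  have ht : (0 : ℝ) < 1 + t ^ 2 := by positivity
  refine ⟨Prod.ext ?_ ?_, rfl⟩
  · have : (u.1 - u'.1) * (1 + t ^ 2) = 0 := by linear_combination h₁ + t * h₂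
    simpa [sub_eq_zero, ht.ne'] using this
  · have : (u.2 - u'.2) * (1 + t ^ 2) = 0 := by linear_combination h₂ - t * h₁
    simpa [sub_eq_zero, ht.ne'] using this

lemma rulingPoint_mem_hyperboloid {u : ℝ × ℝ} (hu : u.1 ^ 2 + u.2 ^ 2 = 1) (t : ℝ) :
    rulingPoint u t ∈ hyperboloid := by
  simp only [hyperboloid, rulingPoint, mem_ofPred_eq]
  linear_combination (1 + t ^ 2) * hu

lemma segment_rulingPoint (u : ℝ × ℝ) (T : ℝ) :
    segment ℝ (rulingPoint u (-T)) (rulingPoint u T) = rulingPoint u '' uIcc (-T) T := by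
  let f : ℝ →ᵃ[ℝ] ℝ × ℝ × ℝ :=
    ⟨rulingPoint u, LinearMap.smulRight LinearMap.id (-u.2, u.1, 1), fun t s => by
      simp only [rulingPoint, vadd_eq_add, LinearMap.smulRight_apply,
        LinearMap.id_apply, Prod.smul_mk, Prod.mk_add_mk, smul_eq_mul]
      ext <;> simp only <;> ring⟩
  rw [← segment_eq_uIcc]
  exact (image_segment ℝ f _ _).symm

lemma segment_rulingPoint_subset_firstRuling (u : ℝ × ℝ) (T : ℝ) :
    segment ℝ (rulingPoint u (-T)) (rulingPoint u T) ⊆ firstRuling u := by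
  rw [segment_rulingPoint]
  rintro _ ⟨t, -, rfl⟩
  exact mem_firstRuling.2 ⟨t, rfl⟩

lemma mem_uIcc_neg_self_iff_sq_le {t T : ℝ} : t ∈ uIcc (-T) T ↔ t ^ 2 ≤ T ^ 2 := by
  rw [sq_le_sq, abs_le]
  rcases le_total 0 T with h | h
  · rw [uIcc_of_le (by linarith), abs_of_nonneg h, mem_Icc]
  · rw [uIcc_of_ge (by linarith), abs_of_nonpos h, neg_neg, mem_Icc]

/-- At the meeting point, of height `t`, one has `u - w = t • J (u + w)` with `J` a rotation by a
right angle; as `‖u ± w‖² = 2 ± 2 u⬝w`, this forces `t ^ 2 = (1 - u⬝w) / (1 + u⬝w)`. -/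
lemma secondRuling_inter_segment_nonempty_iff {u w : ℝ × ℝ} (hu : u.1 ^ 2 + u.2 ^ 2 = 1)
    (hw : w.1 ^ 2 + w.2 ^ 2 = 1) (T : ℝ) :
    (secondRuling w ∩ segment ℝ (rulingPoint u (-T)) (rulingPoint u T)).Nonempty ↔
      1 - T ^ 2 ≤ (1 + T ^ 2) * (u.1 * w.1 + u.2 * w.2) := by
  set c := u.1 * w.1 + u.2 * w.2
  set s := u.1 * w.2 - u.2 * w.1
  have hsc : s ^ 2 + c ^ 2 = 1 := by linear_combination (w.1 ^ 2 + w.2 ^ 2) * hu + hw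
  simp only [segment_rulingPoint, Set.Nonempty, mem_inter_iff, mem_secondRuling, mem_image,
    mem_uIcc_neg_self_iff_sq_le]
  constructor
  · rintro ⟨p, ⟨r, rfl⟩, t, ht, hp⟩
    simp only [rulingPoint, Prod.mk.injEq] at hp
    obtain ⟨e₁, e₂, rfl⟩ := hp
    have h₁ : t * s = 1 - c := by linear_combination -u.1 * e₁ - u.2 * e₂ + hu
    have h₂ : t * (1 + c) = s := by linear_combination w.1 * e₂ - w.2 * e₁ - t * hw
    have hc : 0 ≤ 1 + c := by nlinarith
    nlinarith [mul_le_mul_of_nonneg_right ht hc]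
  · intro h
    have hc : 0 < 1 + c := by nlinarith
    obtain ⟨t, ht⟩ : ∃ t, t * (1 + c) = s := ⟨s / (1 + c), div_mul_cancel₀ _ hc.ne'⟩
    refine ⟨rulingPoint u t, ⟨t, ?_⟩, t, ?_, rfl⟩
    · simp only [rulingPoint, Prod.mk.injEq, and_true]
      constructor
      · refine mul_right_cancel₀ hc.ne' ?_
        linear_combination w.1 * hu - u.1 * hw - (u.2 + w.2) * ht
      · refine mul_right_cancel₀ hc.ne' ?_
        linear_combination w.2 * hu - u.2 * hw + (u.1 + w.1) * ht
    · have : t ^ 2 * (1 + c) = 1 - c := by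
        refine mul_right_cancel₀ hc.ne' ?_
        linear_combination (t * (1 + c) + s) * ht + hsc
      nlinarith

lemma lineThrough_subset_hyperboloid {a v : ℝ × ℝ × ℝ} {r₀ r₁ r₂ : ℝ} (h₀₁ : r₀ ≠ r₁)
    (h₀₂ : r₀ ≠ r₂) (h₁₂ : r₁ ≠ r₂) (e₀ : a + r₀ • v ∈ hyperboloid)
    (e₁ : a + r₁ • v ∈ hyperboloid) (e₂ : a + r₂ • v ∈ hyperboloid) :
    lineThrough a v ⊆ hyperboloid := by
  rintro _ ⟨r, rfl⟩
  simp only [hyperboloid, mem_ofPred_eq, Prod.fst_add, Prod.snd_add, Prod.smul_fst,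
    Prod.smul_snd, smul_eq_mul] at e₀ e₁ e₂ ⊢
  have hV : (r₀ - r₁) * (r₀ - r₂) * (r₁ - r₂) ≠ 0 := by
    simp [sub_eq_zero, h₀₁, h₀₂, h₁₂]
  refine mul_right_cancel₀ hV ?_
  -- Lagrange interpolation of a quadratic in `r` through the nodes `r₀, r₁, r₂`
  linear_combination (r - r₁) * (r - r₂) * (r₁ - r₂) * e₀ - (r - r₀) * (r - r₂) * (r₀ - r₂) * e₁ +
    (r - r₀) * (r - r₁) * (r₀ - r₁) * e₂

lemma exists_lineThrough_eq_of_snd_snd_ne_zero {a v : ℝ × ℝ × ℝ} (hv : v.2.2 ≠ 0) :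
    ∃ p q : ℝ × ℝ, lineThrough a v = lineThrough (p.1, p.2, 0) (q.1, q.2, 1) := by
  refine ⟨((a + (-a.2.2 / v.2.2) • v).1, (a + (-a.2.2 / v.2.2) • v).2.1),
    ((v.2.2⁻¹ • v).1, (v.2.2⁻¹ • v).2.1), ?_⟩
  rw [← lineThrough_add_smul a v (-a.2.2 / v.2.2), ← lineThrough_smul (inv_ne_zero hv)]
  congr 1
  · ext <;> simp [field]
  · ext <;> simp [hv]

lemma eq_swap_neg_or_eq_neg_swap_of_inner_eq_zero {p q : ℝ × ℝ} (hp : p.1 ^ 2 + p.2 ^ 2 = 1)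
    (hq : q.1 ^ 2 + q.2 ^ 2 = 1) (hpq : p.1 * q.1 + p.2 * q.2 = 0) :
    (q.1 = -p.2 ∧ q.2 = p.1) ∨ (q.1 = p.2 ∧ q.2 = -p.1) := by
  have hdet : (p.1 * q.2 - p.2 * q.1 - 1) * (p.1 * q.2 - p.2 * q.1 + 1) = 0 := by
    linear_combination (q.1 ^ 2 + q.2 ^ 2) * hp + hq - (p.1 * q.1 + p.2 * q.2) * hpq
  rcases mul_eq_zero.1 hdet with h | h
  · have : (q.1 + p.2) ^ 2 + (q.2 - p.1) ^ 2 = 0 := by linear_combination hp + hq - 2 * h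
    left
    constructor <;> nlinarith [sq_nonneg (q.1 + p.2), sq_nonneg (q.2 - p.1)]
  · have : (q.1 - p.2) ^ 2 + (q.2 + p.1) ^ 2 = 0 := by linear_combination hp + hq + 2 * h
    right
    constructor <;> nlinarith [sq_nonneg (q.1 - p.2), sq_nonneg (q.2 + p.1)]

lemma eq_firstRuling_or_eq_secondRuling {a v : ℝ × ℝ × ℝ} (hv : v ≠ 0)
    (h : lineThrough a v ⊆ hyperboloid) :
    (∃ u : ℝ × ℝ, u.1 ^ 2 + u.2 ^ 2 = 1 ∧ lineThrough a v = firstRuling u) ∨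
      ∃ w : ℝ × ℝ, w.1 ^ 2 + w.2 ^ 2 = 1 ∧ lineThrough a v = secondRuling w := by
  have hmem : ∀ r : ℝ, a + r • v ∈ hyperboloid := fun r => h ⟨r, rfl⟩
  have hv₃ : v.2.2 ≠ 0 := by
    intro h₃
    have e₀ := hmem 0
    have e₁ := hmem 1
    have e₂ := hmem (-1)
    simp only [hyperboloid, mem_ofPred_eq, Prod.fst_add, Prod.snd_add, Prod.smul_fst,
      Prod.smul_snd, smul_eq_mul, h₃] at e₀ e₁ e₂
    have : v.1 ^ 2 + v.2.1 ^ 2 = 0 := by linear_combination (e₁ + e₂ - 2 * e₀) / 2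
    have h₁ : v.1 = 0 := by nlinarith
    have h₂ : v.2.1 = 0 := by nlinarith
    exact hv (Prod.ext h₁ (Prod.ext h₂ h₃))
  obtain ⟨p, q, hpq⟩ := exists_lineThrough_eq_of_snd_snd_ne_zero (a := a) hv₃
  rw [hpq] at h ⊢
  have e₀ := h ⟨0, rfl⟩
  have e₁ := h ⟨1, rfl⟩
  have e₂ := h ⟨-1, rfl⟩
  simp only [hyperboloid, mem_ofPred_eq, Prod.smul_mk, Prod.mk_add_mk, smul_eq_mul] at e₀ e₁ e₂
  have hp : p.1 ^ 2 + p.2 ^ 2 = 1 := by linear_combination e₀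
  have hq : q.1 ^ 2 + q.2 ^ 2 = 1 := by linear_combination (e₁ + e₂ - 2 * e₀) / 2
  have hpq : p.1 * q.1 + p.2 * q.2 = 0 := by linear_combination (e₁ - e₂) / 4
  rcases eq_swap_neg_or_eq_neg_swap_of_inner_eq_zero hp hq hpq with ⟨h₁, h₂⟩ | ⟨h₁, h₂⟩
  · exact Or.inl ⟨p, hp, by rw [firstRuling, h₁, h₂]⟩
  · exact Or.inr ⟨p, hp, by rw [secondRuling, h₁, h₂]⟩

lemma firstRuling_eq_of_inter_nonempty {u u' : ℝ × ℝ}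
    (h : (firstRuling u ∩ firstRuling u').Nonempty) : u = u' := by
  obtain ⟨p, hp, hp'⟩ := h
  obtain ⟨t, rfl⟩ := mem_firstRuling.1 hp
  obtain ⟨t', ht'⟩ := mem_firstRuling.1 hp'
  exact (rulingPoint_inj ht').1

/-- Such a line meets the hyperboloid in three points, so lies on it, and it is not a line of the
first ruling, whose lines are pairwise disjoint. -/
lemma exists_eq_secondRuling {a v : ℝ × ℝ × ℝ} (hv : v ≠ 0) {u : Fin 3 → ℝ × ℝ}
    (hu : ∀ i, (u i).1 ^ 2 + (u i).2 ^ 2 = 1) (hinj : Function.Injective u)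
    (hmeet : ∀ i, (lineThrough a v ∩ firstRuling (u i)).Nonempty) :
    ∃ w : ℝ × ℝ, w.1 ^ 2 + w.2 ^ 2 = 1 ∧ lineThrough a v = secondRuling w := by
  choose p hpL hpR using hmeet
  choose r hr using hpL
  choose t ht using fun i => mem_firstRuling.1 (hpR i)
  have hrinj : ∀ i j, r i = r j → i = j := fun i j hij =>
    hinj (rulingPoint_inj (by rw [← ht i, ← ht j, hr i, hr j, hij])).1
  have hH : ∀ i, a + r i • v ∈ hyperboloid := fun i => by
    rw [← hr i, ht i]; exact rulingPoint_mem_hyperboloid (hu i) _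
  have hsub := lineThrough_subset_hyperboloid (fun h => by simpa using hrinj 0 1 h)
    (fun h => by simpa using hrinj 0 2 h) (fun h => by simpa using hrinj 1 2 h) (hH 0) (hH 1) (hH 2)
  refine (eq_firstRuling_or_eq_secondRuling hv hsub).resolve_left ?_
  rintro ⟨u', -, hL⟩
  have h₀ : u' = u 0 := firstRuling_eq_of_inter_nonempty ⟨p 0, hL ▸ ⟨r 0, hr 0⟩, hpR 0⟩
  have h₁ : u' = u 1 := firstRuling_eq_of_inter_nonempty ⟨p 1, hL ▸ ⟨r 1, hr 1⟩, hpR 1⟩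
  exact absurd (hinj (h₀.symm.trans h₁)) (by decide)

def secondRulingParam (v : ℝ × ℝ × ℝ) : ℝ × ℝ := (-v.2.1 / v.2.2, v.1 / v.2.2)

lemma eq_of_lineThrough_eq_secondRuling {a v : ℝ × ℝ × ℝ} {w : ℝ × ℝ} (hv : v ≠ 0)
    (h : lineThrough a v = secondRuling w) : v.2.2 ≠ 0 ∧ w = secondRulingParam v := by
  obtain ⟨l, hl, rfl⟩ := exists_smul_eq_of_lineThrough_eq hv h
  simp only [secondRulingParam, Prod.smul_mk, smul_eq_mul, mul_one]
  exact ⟨hl, Prod.ext (by field_simp) (by field_simp)⟩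

lemma secondRuling_injective : Function.Injective secondRuling := fun w w' h => by
  have := (eq_of_lineThrough_eq_secondRuling (a := (w.1, w.2, 0)) (v := (w.2, -w.1, 1))
    (fun h => one_ne_zero (congrArg (fun p => p.2.2) h)) h).2
  simp only [secondRulingParam, neg_neg, div_one] at this
  exact this.symm

def circlePoint (θ : ℝ) : ℝ × ℝ := (cos θ, sin θ)

lemma circlePoint_fst_sq_add_snd_sq (θ : ℝ) : (circlePoint θ).1 ^ 2 + (circlePoint θ).2 ^ 2 = 1 :=
  cos_sq_add_sin_sq θ

lemma secondRuling_circlePoint_inter_segment_iff (c θ ρ : ℝ) (hρ : sin (ρ / 2) ≠ 0) :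
    (secondRuling (circlePoint θ) ∩ segment ℝ (rulingPoint (-circlePoint c) (-cot (ρ / 2)))
      (rulingPoint (-circlePoint c) (cot (ρ / 2)))).Nonempty ↔ cos (θ - c) ≤ cos ρ := by
  have hu : (-circlePoint c).1 ^ 2 + (-circlePoint c).2 ^ 2 = 1 := by
    simpa using circlePoint_fst_sq_add_snd_sq c
  rw [secondRuling_inter_segment_nonempty_iff hu (circlePoint_fst_sq_add_snd_sq θ)]
  have hs : 0 < sin (ρ / 2) ^ 2 := by positivity
  have hρ2 : cos ρ = cos (ρ / 2) ^ 2 - sin (ρ / 2) ^ 2 := by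
    rw [← cos_two_mul', mul_div_cancel₀ _ two_ne_zero]
  rw [← mul_le_mul_iff_of_pos_right hs, cot_eq_cos_div_sin]
  have lhs : (1 - (cos (ρ / 2) / sin (ρ / 2)) ^ 2) * sin (ρ / 2) ^ 2 = -cos ρ := by
    rw [hρ2]; field_simp; ring
  have rhs : (1 + (cos (ρ / 2) / sin (ρ / 2)) ^ 2) *
      ((-circlePoint c).1 * (circlePoint θ).1 + (-circlePoint c).2 * (circlePoint θ).2) *
      sin (ρ / 2) ^ 2 = -cos (θ - c) := by
    simp only [circlePoint, Prod.fst_neg, Prod.snd_neg, cos_sub]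
    field_simp
    linear_combination (-(cos c * cos θ) - sin c * sin θ) * sin_sq_add_cos_sq (ρ / 2)
  rw [lhs, rhs, neg_le_neg_iff]

lemma eq_of_circlePoint_eq {θ θ' : ℝ} (h : circlePoint θ = circlePoint θ')
    (hlt : |θ - θ'| < 2 * π) : θ = θ' := by
  simp only [circlePoint, Prod.mk.injEq] at h
  have h1 : cos (θ - θ') = 1 := by rw [cos_sub, ← h.1, ← h.2, ← sq, ← sq, cos_sq_add_sin_sq]
  rw [abs_lt] at hlt
  linarith [(cos_eq_one_iff_of_lt_of_lt hlt.1 hlt.2).1 h1]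

def polarAngle (w : ℝ × ℝ) : ℝ := Complex.arg (w.1 + w.2 * Complex.I)

lemma circlePoint_polarAngle {w : ℝ × ℝ} (hw : w.1 ^ 2 + w.2 ^ 2 = 1) :
    circlePoint (polarAngle w) = w := by
  have hnorm : ‖(w.1 + w.2 * Complex.I : ℂ)‖ = 1 := by
    rw [Complex.norm_add_mul_I, hw, sqrt_one]
  have hne : (w.1 + w.2 * Complex.I : ℂ) ≠ 0 := fun h => by simp [h] at hnorm
  simp [circlePoint, polarAngle, Complex.cos_arg hne, Complex.sin_arg, hnorm]

lemma polarAngle_circlePoint {θ : ℝ} (hθ : θ ∈ Ioc (-π) π) : polarAngle (circlePoint θ) = θ := by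
  simpa [polarAngle, circlePoint] using Complex.arg_cos_add_sin_mul_I hθ

lemma le_of_cos_le_cos {ρ x : ℝ} (hρ : ρ ≤ π) (hx : 0 ≤ x) (h : cos x ≤ cos ρ) : ρ ≤ x := by
  by_contra! hlt
  linarith [cos_lt_cos_of_nonneg_of_le_pi hx hρ hlt]

lemma cos_le_cos_of_le_of_le {ρ x : ℝ} (hρ : 0 ≤ ρ) (h₁ : ρ ≤ x) (h₂ : x ≤ 2 * π - ρ) :
    cos x ≤ cos ρ := by
  rcases le_total x π with hx | hx
  · exact cos_le_cos_of_nonneg_of_le_pi hρ hx h₁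
  · rw [← cos_two_pi_sub]
    exact cos_le_cos_of_nonneg_of_le_pi hρ (by linarith) (by linarith)

lemma mem_slitPlane_of_polarAngle_ne_pi {w : ℝ × ℝ} (hw : w.1 ^ 2 + w.2 ^ 2 = 1)
    (h : polarAngle w ≠ π) : (w.1 + w.2 * Complex.I : ℂ) ∈ Complex.slitPlane := by
  refine Complex.mem_slitPlane_iff_arg.2 ⟨h, fun h0 => ?_⟩
  have h₁ : w.1 = 0 := by simpa using congrArg Complex.re h0
  have h₂ : w.2 = 0 := by simpa using congrArg Complex.im h0
  rw [h₁, h₂] at hw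
  norm_num at hw

lemma continuousOn_polarAngle_secondRulingParam {v : ℝ → ℝ × ℝ × ℝ} {s : Set ℝ}
    (hv : ContinuousOn v s) (h₃ : ∀ t ∈ s, (v t).2.2 ≠ 0)
    (hw : ∀ t ∈ s, (secondRulingParam (v t)).1 ^ 2 + (secondRulingParam (v t)).2 ^ 2 = 1)
    (hπ : ∀ t ∈ s, polarAngle (secondRulingParam (v t)) ≠ π) :
    ContinuousOn (fun t => polarAngle (secondRulingParam (v t))) s := by
  have hz : ContinuousOn (fun t => ((secondRulingParam (v t)).1 +
      (secondRulingParam (v t)).2 * Complex.I : ℂ)) s :=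
    (Complex.continuous_ofReal.comp_continuousOn (hv.snd.fst.neg.div hv.snd.snd h₃)).add
      ((Complex.continuous_ofReal.comp_continuousOn (hv.fst.div hv.snd.snd h₃)).mul
        continuousOn_const)
  exact fun t ht => ContinuousAt.comp_continuousWithinAt (g := Complex.arg)
    (Complex.continuousAt_arg (mem_slitPlane_of_polarAngle_ne_pi (hw t ht) (hπ t ht))) (hz t ht)

lemma sameComp_secondRuling {n : ℕ} {s : Fin n → Set (ℝ × ℝ × ℝ)} {S : Set ℝ} (hS : Convex ℝ S)
    (h : ∀ θ ∈ S, ∀ i, (secondRuling (circlePoint θ) ∩ s i).Nonempty) {θ θ' : ℝ} (hθ : θ ∈ S)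
    (hθ' : θ' ∈ S) : SameComp s (secondRuling (circlePoint θ)) (secondRuling (circlePoint θ')) := by
  let φ : ℝ → ℝ := fun t => θ + t • (θ' - θ)
  refine ⟨fun t => (cos (φ t), sin (φ t), 0), fun t => (sin (φ t), -cos (φ t), 1),
    (by fun_prop : Continuous _).continuousOn, (by fun_prop : Continuous _).continuousOn,
    fun t _ h => one_ne_zero (congrArg (fun p => p.2.2) h),
    fun t ht => h _ (hS.add_smul_sub_mem hθ hθ' ht), ?_, ?_⟩ <;> simp [φ, secondRuling, circlePoint]

namespace SegmentConfig

section Arcs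

variable (k : ℕ)

def spacing : ℝ := 2 * π / k

def margin : ℝ := spacing k / 4

def arc (j : ℕ) : Set ℝ := Icc (-π + j * spacing k + margin k) (-π + (j + 1) * spacing k - margin k)

def arcMid (j : ℕ) : ℝ := -π + (j + 1 / 2) * spacing k

variable {k}

lemma natCast_mul_spacing (hk : 1 ≤ k) : k * spacing k = 2 * π := by
  have : (k : ℝ) ≠ 0 := by positivity
  rw [spacing, mul_div_cancel₀ _ this]

lemma spacing_pos (hk : 1 ≤ k) : 0 < spacing k := by
  have : (0 : ℝ) < k := by positivity
  exact div_pos (by positivity) this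

lemma margin_pos (hk : 1 ≤ k) : 0 < margin k := by
  have := spacing_pos hk; unfold margin; linarith

lemma margin_le (hk : 1 ≤ k) : margin k ≤ π / 2 := by
  have h₁ := natCast_mul_spacing hk
  have h₂ := spacing_pos hk
  have h₃ : (1 : ℝ) ≤ k := by exact_mod_cast hk
  unfold margin; nlinarith

lemma arcMid_mem_arc (hk : 1 ≤ k) (j : ℕ) : arcMid k j ∈ arc k j := by
  have := spacing_pos hk
  constructor <;> simp only [arcMid, margin] <;> linarith

lemma arc_subset_Ioo (hk : 1 ≤ k) {j : ℕ} (hj : j < k) : arc k j ⊆ Ioo (-π) π := by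
  have h₁ := natCast_mul_spacing hk
  have h₂ := spacing_pos hk
  have hjk : (j : ℝ) + 1 ≤ k := by exact_mod_cast hj
  have : (0 : ℝ) ≤ j := j.cast_nonneg
  intro θ hθ
  simp only [arc, margin, mem_Icc] at hθ
  constructor <;> nlinarith

lemma cos_sub_le_of_mem_arc (hk : 1 ≤ k) {i j : ℕ} (hi : i < k) (hj : j < k) {θ : ℝ}
    (hθ : θ ∈ arc k j) : cos (θ - (-π + i * spacing k)) ≤ cos (margin k) := by
  have h₁ := natCast_mul_spacing hk
  have h₂ := spacing_pos hk
  have h₃ := margin_pos hk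
  have hik : (i : ℝ) + 1 ≤ k := by exact_mod_cast hi
  have hjk : (j : ℝ) + 1 ≤ k := by exact_mod_cast hj
  have h₀ : (0 : ℝ) ≤ i := i.cast_nonneg
  simp only [arc, margin, mem_Icc] at hθ
  rcases le_or_gt i j with hij | hij
  · have hij : (i : ℝ) ≤ j := by exact_mod_cast hij
    apply cos_le_cos_of_le_of_le h₃.le <;> simp only [margin] <;> nlinarith
  · have hij : (j : ℝ) + 1 ≤ i := by exact_mod_cast hij
    rw [← cos_neg, neg_sub]
    apply cos_le_cos_of_le_of_le h₃.le <;> simp only [margin] <;> nlinarith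

lemma cos_sub_le_of_mem_arc_of_add_le (hk : 1 ≤ k) {j : ℕ} (hj : j < k) {θ : ℝ}
    (hθ : θ ∈ arc k j) {d ρ : ℝ} (hd : 0 ≤ d) (hρ : 0 ≤ ρ) (hdρ : d + ρ ≤ margin k) :
    cos (θ - (-π + d)) ≤ cos ρ := by
  have h₁ := natCast_mul_spacing hk
  have h₂ := spacing_pos hk
  have hjk : (j : ℝ) + 1 ≤ k := by exact_mod_cast hj
  have : (0 : ℝ) ≤ j := j.cast_nonneg
  simp only [arc, mem_Icc] at hθ
  apply cos_le_cos_of_le_of_le hρ <;> nlinarith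

lemma exists_mem_arc (hk : 1 ≤ k) {θ : ℝ} (hθ : θ ∈ Ioc (-π) π)
    (h : ∀ i < k, cos (θ - (-π + i * spacing k)) ≤ cos (margin k)) : ∃ j < k, θ ∈ arc k j := by
  have h₁ := natCast_mul_spacing hk
  have h₂ := spacing_pos hk
  have hη := margin_le hk
  have hπ := pi_pos
  obtain ⟨hθ₁, hθ₂⟩ := hθ
  have htop : θ + π ≤ 2 * π - margin k := by
    have h₀ := h 0 hk
    rw [Nat.cast_zero, zero_mul, add_zero, ← cos_two_pi_sub] at h₀
    linarith [le_of_cos_le_cos (by linarith) (by linarith) h₀]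
  set j := ⌊(θ + π) / spacing k⌋₊
  have hj₁ : j * spacing k ≤ θ + π :=
    (le_div_iff₀ h₂).1 (Nat.floor_le (div_nonneg (by linarith) h₂.le))
  have hj₂ : θ + π < (j + 1) * spacing k := (div_lt_iff₀ h₂).1 (Nat.lt_floor_add_one _)
  have hjk : j < k := by
    have : (j : ℝ) < k := lt_of_mul_lt_mul_right (by linarith [margin_pos hk]) h₂.le
    exact_mod_cast this
  refine ⟨j, hjk, ?_, ?_⟩
  · have := le_of_cos_le_cos (by linarith) (by linarith) (h j hjk)
    linarith
  · rcases (Nat.succ_le_of_lt hjk).eq_or_lt with hjk' | hjk'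
    · have : ((j : ℝ) + 1) = k := by exact_mod_cast hjk'
      rw [this, h₁]; linarith
    · have h' := h (j + 1) hjk'
      rw [← cos_neg, neg_sub] at h'
      push_cast at h'
      have := le_of_cos_le_cos (by linarith) (by linarith) h'
      linarith

lemma exists_mem_uIcc_arcMid (hk : 1 ≤ k) {j j' : ℕ} (hj : j < k) (hj' : j' < k) (hne : j ≠ j') :
    ∃ i < k, -π + i * spacing k ∈ uIcc (arcMid k j) (arcMid k j') := by
  have h₂ := spacing_pos hk
  rcases hne.lt_or_gt with hlt | hlt
  · have : (j : ℝ) + 1 ≤ j' := by exact_mod_cast hlt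
    refine ⟨j', hj', mem_uIcc_of_le ?_ ?_⟩ <;> simp only [arcMid] <;> nlinarith
  · have : (j' : ℝ) + 1 ≤ j := by exact_mod_cast hlt
    refine ⟨j, hj, mem_uIcc_of_ge ?_ ?_⟩ <;> simp only [arcMid] <;> nlinarith

end Arcs

section Configuration

variable (n k : ℕ)

def blockCenter (i : ℕ) : ℝ :=
  if i < k then -π + i * spacing k else -π + (i + 1) * (margin k / (2 * n))

def blockRadius (i : ℕ) : ℝ := if i < k then margin k else margin k / 2

def segments (i : Fin n) : Set (ℝ × ℝ × ℝ) :=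
  segment ℝ (rulingPoint (-circlePoint (blockCenter n k i)) (-cot (blockRadius k i / 2)))
    (rulingPoint (-circlePoint (blockCenter n k i)) (cot (blockRadius k i / 2)))

def Admissible (θ : ℝ) : Prop := ∀ i : Fin n, cos (θ - blockCenter n k i) ≤ cos (blockRadius k i)

variable {n k}

lemma blockRadius_pos (hk : 1 ≤ k) (i : ℕ) : 0 < blockRadius k i := by
  have := margin_pos hk
  unfold blockRadius; split_ifs <;> linarith

lemma blockRadius_le (hk : 1 ≤ k) (i : ℕ) : blockRadius k i ≤ π / 2 := by
  have := margin_le hk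
  have := margin_pos hk
  unfold blockRadius; split_ifs <;> linarith

lemma extra_offset_mem_Ioc (hk : 1 ≤ k) {i : ℕ} (hi : i < n) :
    (i + 1) * (margin k / (2 * n)) ∈ Ioc 0 (margin k / 2) := by
  have hη := margin_pos hk
  have hin : (i : ℝ) + 1 ≤ n := by exact_mod_cast hi
  have hn : (0 : ℝ) < n := by linarith [i.cast_nonneg (α := ℝ)]
  refine ⟨by positivity, ?_⟩
  calc (i + 1) * (margin k / (2 * n)) ≤ n * (margin k / (2 * n)) := by gcongr
    _ = margin k / 2 := by field_simp

lemma isTransversal_secondRuling_iff (hk : 1 ≤ k) (θ : ℝ) :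
    IsTransversal (segments n k) (secondRuling (circlePoint θ)) ↔ Admissible n k θ := by
  have hsin : ∀ i, sin (blockRadius k i / 2) ≠ 0 := fun i =>
    (sin_pos_of_pos_of_lt_pi (by linarith [blockRadius_pos hk i])
      (by linarith [blockRadius_le hk i, pi_pos])).ne'
  simp only [IsTransversal, segments, Admissible,
    secondRuling_circlePoint_inter_segment_iff _ _ _ (hsin _), isLine_secondRuling, true_and]

lemma admissible_of_mem_arc (hk : 1 ≤ k) {j : ℕ} (hj : j < k) {θ : ℝ} (hθ : θ ∈ arc k j) :
    Admissible n k θ := by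
  intro i
  unfold blockCenter blockRadius
  split_ifs with hi
  · exact cos_sub_le_of_mem_arc hk hi hj hθ
  · have hd := extra_offset_mem_Ioc hk i.isLt
    exact cos_sub_le_of_mem_arc_of_add_le hk hj hθ hd.1.le (by linarith [margin_pos hk])
      (by linarith [hd.2])

lemma exists_mem_arc_of_admissible (hk : 1 ≤ k) (hkn : k ≤ n) {θ : ℝ} (hθ : θ ∈ Ioc (-π) π)
    (h : Admissible n k θ) : ∃ j < k, θ ∈ arc k j :=
  exists_mem_arc hk hθ fun i hi => by simpa [blockCenter, blockRadius, hi] using h ⟨i, by omega⟩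

lemma not_admissible (hk : 1 ≤ k) (hkn : k ≤ n) {i : ℕ} (hi : i < k) {θ : ℝ}
    (hθ : cos (θ - (-π + i * spacing k)) = 1) : ¬ Admissible n k θ := fun h => by
  have := h ⟨i, by omega⟩
  simp only [blockCenter, blockRadius, hi, if_true] at this
  rw [hθ, ← cos_zero] at this
  linarith [le_of_cos_le_cos (by linarith [margin_le hk, pi_pos]) le_rfl this, margin_pos hk]

lemma blockCenter_mem_Ico (hk : 1 ≤ k) {i : ℕ} (hi : i < n) : blockCenter n k i ∈ Ico (-π) π := by
  have h₁ := natCast_mul_spacing hk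
  have h₂ := spacing_pos hk
  have h₃ := margin_le hk
  have h₄ := margin_pos hk
  unfold blockCenter
  split_ifs with hik
  · have : (i : ℝ) + 1 ≤ k := by exact_mod_cast hik
    have : (0 : ℝ) ≤ i := i.cast_nonneg
    constructor <;> nlinarith
  · have := extra_offset_mem_Ioc hk hi
    constructor <;> linarith [this.1, this.2]

lemma blockCenter_injOn (hk : 1 ≤ k) {i j : ℕ} (hi : i < n) (hj : j < n)
    (h : blockCenter n k i = blockCenter n k j) : i = j := by
  have h₂ := spacing_pos hk
  have h₄ := margin_pos hk
  have hd : 0 < margin k / (2 * n) := by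
    have := (extra_offset_mem_Ioc hk hi).1
    exact pos_of_mul_pos_right this (by positivity)
  -- the extra centers lie in `(-π, -π + spacing k)`
  have hextra : ∀ l < n, ∀ m < k, -π + m * spacing k ≠ -π + (l + 1) * (margin k / (2 * n)) := by
    intro l hl m _ hlm
    have hle := extra_offset_mem_Ioc hk hl
    rcases Nat.eq_zero_or_pos m with rfl | hm
    · rw [Nat.cast_zero, zero_mul] at hlm
      linarith [hle.1]
    · have : (1 : ℝ) ≤ m := by exact_mod_cast hm
      have : spacing k ≤ m * spacing k := by nlinarith
      have : margin k = spacing k / 4 := rfl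
      linarith [hle.2]
  unfold blockCenter at h
  split_ifs at h with hik hjk hjk
  · exact_mod_cast mul_right_cancel₀ h₂.ne' (add_left_cancel h)
  · exact absurd h (hextra j hj i hik)
  · exact absurd h.symm (hextra i hi j hjk)
  · have := mul_right_cancel₀ hd.ne' (add_left_cancel h)
    exact_mod_cast add_right_cancel this

lemma exists_eq_secondRuling_of_isTransversal (hn : 3 ≤ n) (hk : 1 ≤ k) {L : Set (ℝ × ℝ × ℝ)}
    (hL : IsTransversal (segments n k) L) :
    ∃ w : ℝ × ℝ, w.1 ^ 2 + w.2 ^ 2 = 1 ∧ L = secondRuling w := by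
  obtain ⟨⟨a, v, hv, rfl⟩, hmeet⟩ := hL
  let ι : Fin 3 → Fin n := fun i => ⟨i, by omega⟩
  refine exists_eq_secondRuling hv (u := fun i => -circlePoint (blockCenter n k (ι i)))
    (fun i => by simpa using circlePoint_fst_sq_add_snd_sq _) (fun i j hij => ?_) fun i => ?_
  · have hc := blockCenter_mem_Ico hk (ι i).isLt
    have hc' := blockCenter_mem_Ico hk (ι j).isLt
    have := eq_of_circlePoint_eq (neg_injective hij) (abs_sub_lt_iff.2 ⟨by linarith [hc.2, hc'.1],
      by linarith [hc.1, hc'.2]⟩)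
    exact Fin.val_injective (blockCenter_injOn hk (ι i).isLt (ι j).isLt this)
  · obtain ⟨p, hpL, hpS⟩ := hmeet (ι i)
    exact ⟨p, hpL, segment_rulingPoint_subset_firstRuling _ _ hpS⟩

lemma admissible_polarAngle (hk : 1 ≤ k) {w : ℝ × ℝ} (hw : w.1 ^ 2 + w.2 ^ 2 = 1)
    (hL : IsTransversal (segments n k) (secondRuling w)) : Admissible n k (polarAngle w) := by
  rw [← circlePoint_polarAngle hw] at hL
  exact (isTransversal_secondRuling_iff hk _).1 hL

lemma exists_admissible_of_isTransversal (hn : 3 ≤ n) (hk : 1 ≤ k) {L : Set (ℝ × ℝ × ℝ)}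
    (hL : IsTransversal (segments n k) L) :
    ∃ θ ∈ Ioc (-π) π, Admissible n k θ ∧ L = secondRuling (circlePoint θ) := by
  obtain ⟨w, hw, rfl⟩ := exists_eq_secondRuling_of_isTransversal hn hk hL
  exact ⟨polarAngle w, Complex.arg_mem_Ioc _, admissible_polarAngle hk hw hL,
    by rw [circlePoint_polarAngle hw]⟩

lemma not_admissible_pi (hk : 1 ≤ k) (hkn : k ≤ n) : ¬ Admissible n k π :=
  not_admissible hk hkn hk (by rw [Nat.cast_zero, zero_mul, add_zero, sub_neg_eq_add, ← two_mul,
    cos_two_pi])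

lemma not_sameComp (hn : 3 ≤ n) (hk : 1 ≤ k) (hkn : k ≤ n) {j j' : ℕ} (hj : j < k)
    (hj' : j' < k) (hne : j ≠ j') :
    ¬ SameComp (segments n k) (secondRuling (circlePoint (arcMid k j)))
      (secondRuling (circlePoint (arcMid k j'))) := by
  rintro ⟨a, v, -, hv, hv₀, hmeet, h₀, h₁⟩
  have hw : ∀ t ∈ Icc (0 : ℝ) 1, (v t).2.2 ≠ 0 ∧
      (secondRulingParam (v t)).1 ^ 2 + (secondRulingParam (v t)).2 ^ 2 = 1 ∧
      Admissible n k (polarAngle (secondRulingParam (v t))) := by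
    intro t ht
    have hL : IsTransversal (segments n k) (lineThrough (a t) (v t)) :=
      ⟨isLine_lineThrough (hv₀ t ht), hmeet t ht⟩
    obtain ⟨w, hw, hLw⟩ := exists_eq_secondRuling_of_isTransversal hn hk hL
    obtain ⟨h₃, rfl⟩ := eq_of_lineThrough_eq_secondRuling (hv₀ t ht) hLw
    exact ⟨h₃, hw, admissible_polarAngle hk hw (hLw ▸ hL)⟩
  have hcont := continuousOn_polarAngle_secondRulingParam hv (fun t ht => (hw t ht).1)
    (fun t ht => (hw t ht).2.1) fun t ht hπ => not_admissible_pi hk hkn (hπ ▸ (hw t ht).2.2)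
  have hend : ∀ t ∈ Icc (0 : ℝ) 1, ∀ l < k,
      lineThrough (a t) (v t) = secondRuling (circlePoint (arcMid k l)) →
        polarAngle (secondRulingParam (v t)) = arcMid k l := by
    intro t ht l hl hL
    rw [← (eq_of_lineThrough_eq_secondRuling (hv₀ t ht) hL).2]
    exact polarAngle_circlePoint (Ioo_subset_Ioc_self (arc_subset_Ioo hk hl (arcMid_mem_arc hk l)))
  obtain ⟨i, hi, hmem⟩ := exists_mem_uIcc_arcMid hk hj hj' hne
  rw [← hend 0 (by simp) j hj h₀, ← hend 1 (by simp) j' hj' h₁] at hmem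
  rw [← uIcc_of_le zero_le_one] at hcont
  obtain ⟨t, ht, hti⟩ := intermediate_value_uIcc hcont hmem
  rw [uIcc_of_le zero_le_one] at ht
  exact not_admissible hk hkn hi (by simp only at hti; rw [hti, sub_self, cos_zero]) (hw t ht).2.2

lemma infinite_setOf_isTransversal (hk : 1 ≤ k) :
    {L | IsTransversal (segments n k) L}.Infinite := by
  have hsub := arc_subset_Ioo hk hk
  have hinj : InjOn (fun θ => secondRuling (circlePoint θ)) (arc k 0) := fun θ hθ θ' hθ' h =>
    eq_of_circlePoint_eq (secondRuling_injective h) (abs_sub_lt_iff.2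
      ⟨by linarith [(hsub hθ).2, (hsub hθ').1], by linarith [(hsub hθ).1, (hsub hθ').2]⟩)
  have hlt : -π + (0 : ℕ) * spacing k + margin k < -π + ((0 : ℕ) + 1) * spacing k - margin k := by
    simp only [margin]; linarith [spacing_pos hk]
  refine ((Icc_infinite hlt).image hinj).mono ?_
  rintro _ ⟨θ, hθ, rfl⟩
  exact (isTransversal_secondRuling_iff hk θ).2 (admissible_of_mem_arc hk hk hθ)

end Configuration

end SegmentConfig

open SegmentConfig

/-- for every `n ≥ 3` and `1 ≤ k ≤ n` there are `n` segments in ℝ³ with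
infinitely many transversals forming exactly `k` connected components. -/
theorem stmt_2 (n k : ℕ) (hn : 3 ≤ n) (hk1 : 1 ≤ k) (hkn : k ≤ n) :
    ∃ x y : Fin n → ℝ × ℝ × ℝ,
      {L : Set (ℝ × ℝ × ℝ) | IsTransversal (fun i => segment ℝ (x i) (y i)) L}.Infinite ∧
      ∃ T : Fin k → Set (ℝ × ℝ × ℝ),
        (∀ j, IsTransversal (fun i => segment ℝ (x i) (y i)) (T j)) ∧
        (∀ j j', j ≠ j' → ¬ SameComp (fun i => segment ℝ (x i) (y i)) (T j) (T j')) ∧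
        ∀ L, IsTransversal (fun i => segment ℝ (x i) (y i)) L →
          ∃ j, SameComp (fun i => segment ℝ (x i) (y i)) L (T j) := by
  refine ⟨fun i => rulingPoint (-circlePoint (blockCenter n k i)) (-cot (blockRadius k i / 2)),
    fun i => rulingPoint (-circlePoint (blockCenter n k i)) (cot (blockRadius k i / 2)),
    infinite_setOf_isTransversal hk1, fun j => secondRuling (circlePoint (arcMid k j)),
    fun j => ?_, fun j j' hjj' => not_sameComp hn hk1 hkn j.isLt j'.isLt (Fin.val_ne_of_ne hjj'),
    fun L hL => ?_⟩
  · exact (isTransversal_secondRuling_iff hk1 _).2 (admissible_of_mem_arc hk1 j.isLt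
      (arcMid_mem_arc hk1 j))
  · obtain ⟨θ, hθ, hadm, rfl⟩ := exists_admissible_of_isTransversal hn hk1 hL
    obtain ⟨j, hj, hθj⟩ := exists_mem_arc_of_admissible hk1 hkn hθ hadm
    refine ⟨⟨j, hj⟩, sameComp_secondRuling (convex_Icc _ _) (fun φ hφ => ?_) hθj
      (arcMid_mem_arc hk1 j)⟩
    exact ((isTransversal_secondRuling_iff hk1 φ).2 (admissible_of_mem_arc hk1 hj hφ)).2
end
end

section
/- Let s₁, s₂, s₃ be three pairwise distinct real numbers. Every line in ℝ³ that meets each of the lines R(s₁), R(s₂), R(s₃) is equal to C(t) for some t ∈ ℝ. -/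
/-!
Parametrize the line as `r ↦ a + r • v`. On it, `x * y - z` is a polynomial of degree at most
two in `r`, and it vanishes at the three parameters where the line meets `R(s₁)`, `R(s₂)`,
`R(s₃)`; these parameters are distinct because the `x`-coordinates `s₁, s₂, s₃` are. Hence the
polynomial is identically zero, so the line lies on `Q`. Its `x`-coordinate is not constant, so
the vanishing leading coefficient `v.1 * v.2.1` forces `v.2.1 = 0`: a line on `Q` with constant
`y = t` is `C(t)`.
-/

open Set

noncomputable section

/-- The line `R(s) = {(s, t, s*t) : t ∈ ℝ}` of the first ruling of `z = x*y`. -/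
def Rline (s : ℝ) : Set (ℝ × ℝ × ℝ) := {p | ∃ t : ℝ, p = (s, t, s * t)}

/-- The line `C(t) = {(u, t, u*t) : u ∈ ℝ}` of the second ruling of `z = x*y`. -/
def Cline (t : ℝ) : Set (ℝ × ℝ × ℝ) := {p | ∃ u : ℝ, p = (u, t, u * t)}

def hyperbolicParaboloid : Set (ℝ × ℝ × ℝ) := {p | p.2.2 = p.1 * p.2.1}

lemma mem_Rline_iff {s : ℝ} {p : ℝ × ℝ × ℝ} :
    p ∈ Rline s ↔ p.1 = s ∧ p ∈ hyperbolicParaboloid := by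
  obtain ⟨x, y, z⟩ := p
  simp only [Rline, hyperbolicParaboloid, mem_ofPred_eq, Prod.mk.injEq]
  constructor
  · rintro ⟨t, rfl, rfl, rfl⟩
    exact ⟨rfl, rfl⟩
  · rintro ⟨rfl, rfl⟩
    exact ⟨y, rfl, rfl, rfl⟩

lemma mem_Cline_iff {t : ℝ} {p : ℝ × ℝ × ℝ} :
    p ∈ Cline t ↔ p.2.1 = t ∧ p ∈ hyperbolicParaboloid := by
  obtain ⟨x, y, z⟩ := p
  simp only [Cline, hyperbolicParaboloid, mem_ofPred_eq, Prod.mk.injEq]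
  constructor
  · rintro ⟨u, rfl, rfl, rfl⟩
    exact ⟨rfl, rfl⟩
  · rintro ⟨rfl, rfl⟩
    exact ⟨x, rfl, rfl, rfl⟩

lemma add_smul_mem_hyperbolicParaboloid_iff {a v : ℝ × ℝ × ℝ} {r : ℝ} :
    a + r • v ∈ hyperbolicParaboloid ↔
      v.1 * v.2.1 * r ^ 2 + (a.1 * v.2.1 + a.2.1 * v.1 - v.2.2) * r + (a.1 * a.2.1 - a.2.2) = 0 := by
  simp only [hyperbolicParaboloid, mem_ofPred_eq, Prod.fst_add, Prod.snd_add, Prod.smul_fst,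
    Prod.smul_snd, smul_eq_mul]
  constructor <;> intro h <;> linear_combination -h

lemma exists_param_of_inter_Rline_nonempty {a v : ℝ × ℝ × ℝ} {s : ℝ}
    (h : (lineThrough a v ∩ Rline s).Nonempty) :
    ∃ r : ℝ, a.1 + r * v.1 = s ∧ a + r • v ∈ hyperbolicParaboloid := by
  obtain ⟨p, ⟨r, rfl⟩, hp⟩ := h
  obtain ⟨hx, hQ⟩ := mem_Rline_iff.1 hp
  exact ⟨r, by simpa using hx, hQ⟩

lemma quadratic_coeffs_eq_zero_of_three_roots {K : Type*} [CommRing K] [IsDomain K]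
    {A B C r₁ r₂ r₃ : K} (h₁₂ : r₁ ≠ r₂) (h₁₃ : r₁ ≠ r₃) (h₂₃ : r₂ ≠ r₃)
    (q₁ : A * r₁ ^ 2 + B * r₁ + C = 0) (q₂ : A * r₂ ^ 2 + B * r₂ + C = 0)
    (q₃ : A * r₃ ^ 2 + B * r₃ + C = 0) :
    A = 0 ∧ B = 0 ∧ C = 0 := by
  have l₁₂ : A * (r₁ + r₂) + B = 0 := by
    refine (mul_eq_zero.1 ?_).resolve_left (sub_ne_zero.2 h₁₂)
    linear_combination q₁ - q₂
  have l₁₃ : A * (r₁ + r₃) + B = 0 := by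
    refine (mul_eq_zero.1 ?_).resolve_left (sub_ne_zero.2 h₁₃)
    linear_combination q₁ - q₃
  have hA : A = 0 := by
    refine (mul_eq_zero.1 ?_).resolve_right (sub_ne_zero.2 h₂₃)
    linear_combination l₁₂ - l₁₃
  have hB : B = 0 := by linear_combination l₁₂ - (r₁ + r₂) * hA
  exact ⟨hA, hB, by linear_combination q₁ - r₁ ^ 2 * hA - r₁ * hB⟩

lemma lineThrough_eq_Cline {a v : ℝ × ℝ × ℝ} (hv₁ : v.1 ≠ 0) (hv₂ : v.2.1 = 0)
    (hQ : ∀ r : ℝ, a + r • v ∈ hyperbolicParaboloid) :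
    lineThrough a v = Cline a.2.1 := by
  ext p
  rw [mem_Cline_iff]
  constructor
  · rintro ⟨r, rfl⟩
    exact ⟨by simp [hv₂], hQ r⟩
  · rintro ⟨hy, hp⟩
    refine ⟨(p.1 - a.1) / v.1, ?_⟩
    have hx : (a + ((p.1 - a.1) / v.1) • v).1 = p.1 := by
      simp only [Prod.fst_add, Prod.smul_fst, smul_eq_mul]
      field_simp
      ring
    have hy' : (a + ((p.1 - a.1) / v.1) • v).2.1 = p.2.1 := by simp [hv₂, hy]
    have hz := hQ ((p.1 - a.1) / v.1)
    simp only [hyperbolicParaboloid, mem_ofPred_eq] at hp hz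
    exact Prod.ext hx.symm (Prod.ext hy'.symm (by rw [hz, hx, hy', hp]))

/-- every line meeting `R(s₁)`, `R(s₂)`, `R(s₃)` for pairwise distinct
`s₁, s₂, s₃` is a line `C(t)` of the second ruling. -/
theorem stmt_5 (s₁ s₂ s₃ : ℝ) (h12 : s₁ ≠ s₂) (h13 : s₁ ≠ s₃) (h23 : s₂ ≠ s₃)
    (L : Set (ℝ × ℝ × ℝ)) (hL : IsLine L)
    (m1 : (L ∩ Rline s₁).Nonempty) (m2 : (L ∩ Rline s₂).Nonempty)
    (m3 : (L ∩ Rline s₃).Nonempty) :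
    ∃ t : ℝ, L = Cline t := by
  obtain ⟨a, v, -, rfl⟩ := hL
  obtain ⟨r₁, hx₁, hQ₁⟩ := exists_param_of_inter_Rline_nonempty m1
  obtain ⟨r₂, hx₂, hQ₂⟩ := exists_param_of_inter_Rline_nonempty m2
  obtain ⟨r₃, hx₃, hQ₃⟩ := exists_param_of_inter_Rline_nonempty m3
  have hr₁₂ : r₁ ≠ r₂ := by rintro rfl; exact h12 (hx₁.symm.trans hx₂)
  have hr₁₃ : r₁ ≠ r₃ := by rintro rfl; exact h13 (hx₁.symm.trans hx₃)
  have hr₂₃ : r₂ ≠ r₃ := by rintro rfl; exact h23 (hx₂.symm.trans hx₃)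
  have hv₁ : v.1 ≠ 0 := fun h ↦ h12 (by rw [← hx₁, ← hx₂, h, mul_zero, mul_zero])
  obtain ⟨hA, hB, hC⟩ := quadratic_coeffs_eq_zero_of_three_roots hr₁₂ hr₁₃ hr₂₃
    (add_smul_mem_hyperbolicParaboloid_iff.1 hQ₁) (add_smul_mem_hyperbolicParaboloid_iff.1 hQ₂)
    (add_smul_mem_hyperbolicParaboloid_iff.1 hQ₃)
  have hv₂ : v.2.1 = 0 := (mul_eq_zero.1 hA).resolve_left hv₁
  refine ⟨a.2.1, lineThrough_eq_Cline hv₁ hv₂ fun r ↦ ?_⟩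
  rw [add_smul_mem_hyperbolicParaboloid_iff, hA, hB, hC]
  ring
end
end

section
/- Let σ₁, …, σ_n be closed line segments in ℝ³ such that each σᵢ is contained in some line R(cᵢ) of the first ruling of the hyperbolic paraboloid Q = {z = x*y}. Then the set {t ∈ ℝ : C(t) meets every σᵢ} is order-connected, i.e., it is an interval: if t₁ ≤ t ≤ t₂ and t₁, t₂ belong to the set, then t belongs to the set. -/
open Set

noncomputable section

/-- for segments lying on lines of the first ruling of `z = x*y`, the set of
parameters `t` such that `C(t)` meets every segment is order-connected. -/
theorem stmt_6 (n : ℕ) (x y : Fin n → ℝ × ℝ × ℝ) (c : Fin n → ℝ)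
    (hσ : ∀ i, segment ℝ (x i) (y i) ⊆ Rline (c i))
    (t₁ t t₂ : ℝ) (h1 : t₁ ≤ t) (h2 : t ≤ t₂)
    (ht₁ : ∀ i, (Cline t₁ ∩ segment ℝ (x i) (y i)).Nonempty)
    (ht₂ : ∀ i, (Cline t₂ ∩ segment ℝ (x i) (y i)).Nonempty) :
    ∀ i, (Cline t ∩ segment ℝ (x i) (y i)).Nonempty := by
  intro i
  obtain ⟨p, hpC, hpS⟩ := ht₁ i
  obtain ⟨q, hqC, hqS⟩ := ht₂ i
  obtain ⟨u₁, hu₁⟩ := hpC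
  obtain ⟨u₂, hu₂⟩ := hqC
  obtain ⟨a₁, b₁, ha₁, hb₁, hab₁, hp⟩ := hpS
  obtain ⟨a₂, b₂, ha₂, hb₂, hab₂, hq⟩ := hqS
  set X := (x i).2.1 with hX
  set Y := (y i).2.1 with hY
  have hpt : t₁ = a₁ * X + b₁ * Y := by
    have h := congrArg (fun r : ℝ × ℝ × ℝ => r.2.1) hp.symm
    rw [hu₁] at h
    simpa [Prod.smul_def, smul_eq_mul] using h
  have hqt : t₂ = a₂ * X + b₂ * Y := by
    have h := congrArg (fun r : ℝ × ℝ × ℝ => r.2.1) hq.symm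
    rw [hu₂] at h
    simpa [Prod.smul_def, smul_eq_mul] using h
  have ht1mem : t₁ ∈ segment ℝ X Y := ⟨a₁, b₁, ha₁, hb₁, hab₁, hpt.symm⟩
  have ht2mem : t₂ ∈ segment ℝ X Y := ⟨a₂, b₂, ha₂, hb₂, hab₂, hqt.symm⟩
  rw [segment_eq_uIcc] at ht1mem ht2mem
  have htmem : t ∈ segment ℝ X Y := by
    rw [segment_eq_uIcc]
    exact ⟨le_trans ht1mem.1 h1, le_trans h2 ht2mem.2⟩
  obtain ⟨a, b, ha, hb, hab, hts⟩ := htmem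
  refine ⟨a • x i + b • y i, ?_, ⟨a, b, ha, hb, hab, rfl⟩⟩
  have hmem : a • x i + b • y i ∈ Rline (c i) := hσ i ⟨a, b, ha, hb, hab, rfl⟩
  obtain ⟨τ, hτ⟩ := hmem
  have h2nd : τ = t := by
    have h := congrArg (fun r : ℝ × ℝ × ℝ => r.2.1) hτ
    simp [Prod.smul_def, smul_eq_mul] at h
    rw [← h]
    simpa [smul_eq_mul] using hts
  exact ⟨c i, by rw [hτ, h2nd]⟩
end
end

section
/- Let σ be a closed line segment in ℝ³ contained in some line L(θ₀) of the first ruling of the hyperboloid of one sheet S. Then the set {φ ∈ ℝ : M(φ) meets σ} is invariant under φ ↦ φ + 2π, and its image in the circle AddCircle (2π) under the quotient map ℝ → AddCircle (2π) is a connected subset of AddCircle (2π). -/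
/-! The point of `L(θ)` with parameter `t` lies on `M(φ)` iff
`sin ((φ - θ) / 2) = t * cos ((φ - θ) / 2)`, i.e. iff `φ ≡ θ + 2 * arctan t (mod 2π)`.
So if `σ` is the part of `L(θ₀)` with parameters in `[a, b]`, the set of `φ` with `M(φ)` meeting
`σ` is the preimage in `ℝ` of the image of `[a, b]` under the continuous map
`t ↦ θ₀ + 2 * arctan t (mod 2π)`: it is `2π`-periodic, and its image in the circle is a
continuous image of an interval. -/

open Set

noncomputable section

/-- The line `L(θ)` of the first ruling of the hyperboloid `x² + y² − z² = 1`. -/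
def Lrul (θ : ℝ) : Set (ℝ × ℝ × ℝ) :=
  {p | ∃ t : ℝ, p = (Real.cos θ - t * Real.sin θ, Real.sin θ + t * Real.cos θ, t)}

/-- The line `M(θ)` of the second ruling of the hyperboloid `x² + y² − z² = 1`. -/
def Mrul (θ : ℝ) : Set (ℝ × ℝ × ℝ) :=
  {p | ∃ t : ℝ, p = (Real.cos θ - t * Real.sin θ, Real.sin θ + t * Real.cos θ, -t)}

open Real

def lrulPoint (θ t : ℝ) : ℝ × ℝ × ℝ :=
  (cos θ - t * sin θ, sin θ + t * cos θ, t)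

lemma Lrul_eq_range (θ : ℝ) : Lrul θ = range (lrulPoint θ) := by
  ext p
  exact exists_congr fun t => eq_comm

lemma lrulPoint_eq_lineMap (θ : ℝ) :
    lrulPoint θ = AffineMap.lineMap (lrulPoint θ 0) (lrulPoint θ 1) := by
  ext t <;> simp [lrulPoint, AffineMap.lineMap_apply_module'] <;> ring

lemma image_lrulPoint_segment (θ a b : ℝ) :
    lrulPoint θ '' segment ℝ a b = segment ℝ (lrulPoint θ a) (lrulPoint θ b) := by
  rw [lrulPoint_eq_lineMap, image_segment]

lemma lrulPoint_mem_Mrul_iff (θ φ t : ℝ) :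
    lrulPoint θ t ∈ Mrul φ ↔ sin ((φ - θ) / 2) = t * cos ((φ - θ) / 2) := by
  obtain ⟨u, d, rfl, rfl⟩ : ∃ u d, θ = u - d ∧ φ = u + d :=
    ⟨(φ + θ) / 2, (φ - θ) / 2, by ring, by ring⟩
  have hd : (u + d - (u - d)) / 2 = d := by ring
  simp only [lrulPoint, Mrul, mem_ofPred_eq, Prod.mk.injEq, hd, cos_add, cos_sub, sin_add,
    sin_sub]
  -- The first two coordinate equations say `2 sin u (sin d - t cos d) = 0` and
  -- `2 cos u (sin d - t cos d) = 0`.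
  constructor
  · rintro ⟨s, h₁, h₂, rfl⟩
    linear_combination (sin u / 2) * h₁ - (cos u / 2) * h₂ -
      (s * cos d + sin d) * sin_sq_add_cos_sq u
  · intro h
    exact ⟨-t, by linear_combination (2 * sin u) * h, by linear_combination (-2 * cos u) * h,
      by ring⟩

lemma sin_sub_arctan (d t : ℝ) :
    sin (d - arctan t) = cos (arctan t) * (sin d - t * cos d) := by
  have : sin (arctan t) = t * cos (arctan t) := by rw [sin_arctan, cos_arctan]; ring
  rw [sin_sub, this]
  ring

lemma sin_eq_mul_cos_iff (d t : ℝ) : sin d = t * cos d ↔ ∃ n : ℤ, n * π = d - arctan t := by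
  rw [← sin_eq_zero_iff, sin_sub_arctan, mul_eq_zero, sub_eq_zero,
    or_iff_right (cos_arctan_pos t).ne']

lemma sin_half_sub_eq_mul_cos_half_sub_iff (φ θ t : ℝ) :
    sin ((φ - θ) / 2) = t * cos ((φ - θ) / 2) ↔
      (φ : AddCircle (2 * π)) = ↑(θ + 2 * arctan t) := by
  rw [sin_eq_mul_cos_iff, ← sub_eq_zero, ← AddCircle.coe_sub, AddCircle.coe_eq_zero_iff]
  refine exists_congr fun n => ?_
  rw [zsmul_eq_mul]
  constructor <;> intro h <;> linarith

lemma lrulPoint_mem_Mrul_iff_coe (θ φ t : ℝ) :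
    lrulPoint θ t ∈ Mrul φ ↔ (φ : AddCircle (2 * π)) = ↑(θ + 2 * arctan t) :=
  (lrulPoint_mem_Mrul_iff θ φ t).trans (sin_half_sub_eq_mul_cos_half_sub_iff φ θ t)

lemma Mrul_inter_segment_nonempty_iff (θ φ a b : ℝ) :
    (Mrul φ ∩ segment ℝ (lrulPoint θ a) (lrulPoint θ b)).Nonempty ↔
      (φ : AddCircle (2 * π)) ∈
        (fun t => ((θ + 2 * arctan t : ℝ) : AddCircle (2 * π))) '' segment ℝ a b := by
  rw [← image_lrulPoint_segment]
  constructor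
  · rintro ⟨_, hM, t, ht, rfl⟩
    exact ⟨t, ht, ((lrulPoint_mem_Mrul_iff_coe θ φ t).1 hM).symm⟩
  · rintro ⟨t, ht, h⟩
    exact ⟨_, (lrulPoint_mem_Mrul_iff_coe θ φ t).2 h.symm, t, ht, rfl⟩

/-- for a segment contained in a line `L(θ₀)` of the first ruling, the set of
`φ` with `M(φ)` meeting the segment is `2π`-periodic and its image in the circle
`AddCircle (2π)` is connected. -/
theorem stmt_9 (x y : ℝ × ℝ × ℝ) (θ₀ : ℝ) (hσ : segment ℝ x y ⊆ Lrul θ₀) :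
    (∀ φ : ℝ, φ + 2 * Real.pi ∈ {φ : ℝ | (Mrul φ ∩ segment ℝ x y).Nonempty} ↔
      φ ∈ {φ : ℝ | (Mrul φ ∩ segment ℝ x y).Nonempty}) ∧
    IsConnected ((fun φ : ℝ => (φ : AddCircle (2 * Real.pi))) ''
      {φ : ℝ | (Mrul φ ∩ segment ℝ x y).Nonempty}) := by
  rw [Lrul_eq_range] at hσ
  obtain ⟨a, rfl⟩ := hσ (left_mem_segment ℝ x y)
  obtain ⟨b, rfl⟩ := hσ (right_mem_segment ℝ _ y)
  set T := (fun t => ((θ₀ + 2 * arctan t : ℝ) : AddCircle (2 * π))) '' segment ℝ a b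
  have hS : {φ : ℝ | (Mrul φ ∩ segment ℝ (lrulPoint θ₀ a) (lrulPoint θ₀ b)).Nonempty} =
      (fun φ : ℝ => (φ : AddCircle (2 * π))) ⁻¹' T :=
    ext fun φ => Mrul_inter_segment_nonempty_iff θ₀ φ a b
  rw [hS, image_preimage_eq T QuotientAddGroup.mk_surjective]
  refine ⟨fun φ => by simp only [mem_preimage, AddCircle.coe_add_period], ?_⟩
  exact ((convex_segment a b).isConnected ⟨a, left_mem_segment ℝ a b⟩).image _
    ((AddCircle.continuous_mk' _).comp (by fun_prop)).continuousOn
end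
end

section
/- Let H be a plane (two-dimensional affine subspace) in ℝ³, let ℓ₁ and ℓ₂ be two distinct lines contained in H that meet at a point p, and let ℓ₃ be a line whose intersection with H is exactly the single point q, with q ≠ p. Let K be the plane spanned by ℓ₃ and p (the affine span of ℓ₃ ∪ {p}). Then every line in ℝ³ that meets ℓ₁, ℓ₂ and ℓ₃ either contains p and is contained in K, or contains q and is contained in H. -/
open Set

noncomputable section

/-- `H` is a plane (two-dimensional affine subspace) in ℝ³. -/
def IsPlane (H : Set (ℝ × ℝ × ℝ)) : Prop :=
  ∃ a u w : ℝ × ℝ × ℝ, LinearIndependent ℝ ![u, w] ∧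
    H = {p | ∃ r s : ℝ, p = a + r • u + s • w}

lemma lineThrough_eq_of_mem {a v x y : ℝ × ℝ × ℝ} (hv : v ≠ 0)
    (hx : x ∈ lineThrough a v) (hy : y ∈ lineThrough a v) (hxy : x ≠ y) :
    lineThrough a v = lineThrough x (y - x) := by
  obtain ⟨r₁, rfl⟩ := hx
  obtain ⟨r₂, rfl⟩ := hy
  have hr : r₂ - r₁ ≠ 0 := by
    intro h
    apply hxy
    have : r₁ = r₂ := by linarith [sub_eq_zero.mp h]
    rw [this]
  ext z
  constructor
  · rintro ⟨r, rfl⟩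
    refine ⟨(r - r₁)/(r₂ - r₁), ?_⟩
    match_scalars <;> field_simp <;> ring
  · rintro ⟨t, rfl⟩
    exact ⟨r₁ + t * (r₂ - r₁), by module⟩

lemma line_subset_plane {H : Set (ℝ × ℝ × ℝ)} (hH : IsPlane H) {x y : ℝ × ℝ × ℝ}
    (hx : x ∈ H) (hy : y ∈ H) : lineThrough x (y - x) ⊆ H := by
  obtain ⟨a, u, w, -, rfl⟩ := hH
  obtain ⟨r₁, s₁, rfl⟩ := hx
  obtain ⟨r₂, s₂, rfl⟩ := hy
  rintro z ⟨t, rfl⟩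
  exact ⟨r₁ + t * (r₂ - r₁), s₁ + t * (s₂ - s₁), by module⟩

lemma line_eq_of_two_points {l₁ l₂ : Set (ℝ × ℝ × ℝ)} (h₁ : IsLine l₁) (h₂ : IsLine l₂)
    {x y : ℝ × ℝ × ℝ} (hx1 : x ∈ l₁) (hy1 : y ∈ l₁) (hx2 : x ∈ l₂) (hy2 : y ∈ l₂)
    (hxy : x ≠ y) : l₁ = l₂ := by
  obtain ⟨a₁, v₁, hv₁, rfl⟩ := h₁
  obtain ⟨a₂, v₂, hv₂, rfl⟩ := h₂
  rw [lineThrough_eq_of_mem hv₁ hx1 hy1 hxy, lineThrough_eq_of_mem hv₂ hx2 hy2 hxy]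

lemma line_subset_plane_of_two_points {H L : Set (ℝ × ℝ × ℝ)} (hH : IsPlane H)
    (hL : IsLine L) {x y : ℝ × ℝ × ℝ} (hxL : x ∈ L) (hyL : y ∈ L) (hxy : x ≠ y)
    (hx : x ∈ H) (hy : y ∈ H) : L ⊆ H := by
  obtain ⟨a, v, hv, rfl⟩ := hL
  rw [lineThrough_eq_of_mem hv hxL hyL hxy]
  exact line_subset_plane hH hx hy

/-- if `ℓ₁, ℓ₂` are distinct lines in a plane `H` meeting at `p`, and `ℓ₃`
is a line meeting `H` exactly at a point `q ≠ p`, and `K` is the plane spanned by `ℓ₃`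
and `p`, then every line meeting `ℓ₁`, `ℓ₂`, `ℓ₃` contains `p` and lies in `K`, or
contains `q` and lies in `H`. -/
theorem stmt_11 (H K l₁ l₂ l₃ : Set (ℝ × ℝ × ℝ)) (p q : ℝ × ℝ × ℝ)
    (hH : IsPlane H) (hl₁ : IsLine l₁) (hl₂ : IsLine l₂)
    (hl₁H : l₁ ⊆ H) (hl₂H : l₂ ⊆ H) (h12 : l₁ ≠ l₂)
    (hp : p ∈ l₁ ∩ l₂)
    (hl₃ : IsLine l₃) (hl₃H : l₃ ∩ H = {q}) (hqp : q ≠ p)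
    (hK : IsPlane K) (hl₃K : l₃ ⊆ K) (hpK : p ∈ K) :
    ∀ L, IsLine L → (L ∩ l₁).Nonempty → (L ∩ l₂).Nonempty → (L ∩ l₃).Nonempty →
      (p ∈ L ∧ L ⊆ K) ∨ (q ∈ L ∧ L ⊆ H) := by
  intro L hL h1 h2 h3
  obtain ⟨x₁, hx₁L, hx₁⟩ := h1
  obtain ⟨x₂, hx₂L, hx₂⟩ := h2
  obtain ⟨x₃, hx₃L, hx₃⟩ := h3
  have hpH : p ∈ H := hl₁H hp.1
  by_cases hx₃H : x₃ ∈ H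
  · -- x₃ = q case
    have hq : x₃ = q := by
      have : x₃ ∈ l₃ ∩ H := ⟨hx₃, hx₃H⟩
      rw [hl₃H] at this
      exact this
    subst hq
    right
    refine ⟨hx₃L, ?_⟩
    -- at least one of x₁, x₂ differs from x₃ (= q)
    by_cases hx1q : x₁ = x₃
    · by_cases hx2q : x₂ = x₃
      · exfalso
        apply h12
        apply line_eq_of_two_points hl₁ hl₂ hp.1 (hx1q ▸ hx₁) hp.2 (hx2q ▸ hx₂)
        exact fun h => hqp h.symm
      · exact line_subset_plane_of_two_points hH hL hx₂L hx₃L hx2q (hl₂H hx₂) hx₃H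
    · exact line_subset_plane_of_two_points hH hL hx₁L hx₃L hx1q (hl₁H hx₁) hx₃H
  · -- x₃ ∉ H case
    left
    have hx12 : x₁ = x₂ := by
      by_contra hne
      exact hx₃H (line_subset_plane_of_two_points hH hL hx₁L hx₂L hne
        (hl₁H hx₁) (hl₂H hx₂) hx₃L)
    have hx1p : x₁ = p := by
      by_contra hne
      exact h12 (line_eq_of_two_points hl₁ hl₂ hx₁ hp.1 (hx12 ▸ hx₂) hp.2 hne)
    have hpL : p ∈ L := hx1p ▸ hx₁L
    refine ⟨hpL, ?_⟩
    have hx₃p : x₃ ≠ p := fun h => hx₃H (h ▸ hpH)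
    exact line_subset_plane_of_two_points hK hL hx₃L hpL hx₃p (hl₃K hx₃) hpK
end
end

section
/- Let q ∈ ℝ² and let σ be a closed line segment in ℝ². The set {θ ∈ ℝ : the line {q + r • (cos θ, sin θ) : r ∈ ℝ} meets σ} is invariant under θ ↦ θ + π, and its image in the circle AddCircle π under the quotient map ℝ → AddCircle π is a connected subset of AddCircle π. -/
/-!
If `q` lies on `σ`, every line through `q` meets `σ`. Otherwise the line with direction `θ` meets
`σ` exactly when `θ ≡ arg (p - q) (mod π)` for some `p ∈ σ`, so the image in `AddCircle π` is the
image of `σ` under `p ↦ arg (p - q) mod π`. This map is continuous away from `q`: the jump of `arg`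
by `2π` across the negative real axis disappears modulo `π`. Hence the image of the connected
segment is connected.
-/

open Set

noncomputable section

def lineThrough2 (a v : ℝ × ℝ) : Set (ℝ × ℝ) :=
  {p | ∃ r : ℝ, p = a + r • v}

def IsLine2 (L : Set (ℝ × ℝ)) : Prop :=
  ∃ a v : ℝ × ℝ, v ≠ 0 ∧ L = lineThrough2 a v

open Complex Real

namespace Real.Angle

def toAddCirclePi : Real.Angle →+ AddCircle π :=
  QuotientAddGroup.map _ _ (AddMonoidHom.id ℝ) <|
    AddSubgroup.zmultiples_le_of_mem <| AddSubgroup.mem_zmultiples_iff.mpr ⟨2, by simp [two_mul]⟩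

@[simp]
lemma toAddCirclePi_coe (θ : ℝ) : toAddCirclePi θ = (θ : AddCircle π) := rfl

lemma continuous_toAddCirclePi : Continuous toAddCirclePi :=
  (QuotientAddGroup.isQuotientMap_mk _).continuous_iff.mpr QuotientAddGroup.continuous_mk

end Real.Angle

open Real.Angle

lemma toAddCirclePi_arg_ofReal_mul {r : ℝ} (hr : r ≠ 0) {z : ℂ} (hz : z ≠ 0) :
    toAddCirclePi (arg (r * z)) = toAddCirclePi (arg z) := by
  rcases hr.lt_or_gt with hneg | hpos
  · have hrz : (r : ℂ) * z = -((-r : ℝ) * z) := by push_cast; ring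
    rw [hrz, arg_neg_coe_angle (mul_ne_zero (by exact_mod_cast neg_ne_zero.mpr hr) hz),
      arg_real_mul _ (neg_pos.mpr hneg), map_add, toAddCirclePi_coe π, AddCircle.coe_period,
      add_zero]
  · rw [arg_real_mul _ hpos]

lemma lineThrough2_neg (a v : ℝ × ℝ) : lineThrough2 a (-v) = lineThrough2 a v := by
  ext p
  constructor <;> rintro ⟨r, rfl⟩ <;> exact ⟨-r, by simp⟩

def anglesMeeting (q : ℝ × ℝ) (S : Set (ℝ × ℝ)) : Set ℝ :=
  {θ | (lineThrough2 q (Real.cos θ, Real.sin θ) ∩ S).Nonempty}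

lemma add_pi_mem_anglesMeeting_iff (q : ℝ × ℝ) (S : Set (ℝ × ℝ)) (θ : ℝ) :
    θ + π ∈ anglesMeeting q S ↔ θ ∈ anglesMeeting q S := by
  have hdir : ((Real.cos (θ + π), Real.sin (θ + π)) : ℝ × ℝ) = -(Real.cos θ, Real.sin θ) := by
    simp
  simp only [anglesMeeting, mem_ofPred_eq, hdir, lineThrough2_neg]

lemma anglesMeeting_of_mem {q : ℝ × ℝ} {S : Set (ℝ × ℝ)} (hq : q ∈ S) :
    anglesMeeting q S = univ :=
  eq_univ_of_forall fun _ => ⟨q, ⟨0, by simp⟩, hq⟩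

def directionModPi (q p : ℝ × ℝ) : AddCircle π :=
  toAddCirclePi (arg (equivRealProdCLM.symm (p - q)))

lemma continuousAt_directionModPi {q p : ℝ × ℝ} (hpq : p ≠ q) :
    ContinuousAt (directionModPi q) p := by
  have hz : equivRealProdCLM.symm (p - q) ≠ 0 :=
    EmbeddingLike.map_ne_zero_iff.mpr (sub_ne_zero.mpr hpq)
  exact continuous_toAddCirclePi.continuousAt.comp <|
    (continuousAt_arg_coe_angle hz).comp (f := fun p => equivRealProdCLM.symm (p - q)) (by fun_prop)

lemma directionModPi_add_smul (q : ℝ × ℝ) {r : ℝ} (hr : r ≠ 0) (θ : ℝ) :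
    directionModPi q (q + r • (Real.cos θ, Real.sin θ)) = θ := by
  have hz : equivRealProdCLM.symm (r • (Real.cos θ, Real.sin θ)) =
      r * (Real.cos θ + Real.sin θ * I) := by
    rw [map_smul, equivRealProdCLM_symm_apply, real_smul]
  rw [directionModPi, add_sub_cancel_left, hz, toAddCirclePi_arg_ofReal_mul hr
    (by simp [← exp_mul_I]), ← Real.Angle.cos_coe, ← Real.Angle.sin_coe,
    arg_cos_add_sin_mul_I_coe_angle, toAddCirclePi_coe]

lemma image_anglesMeeting_of_notMem {q : ℝ × ℝ} {S : Set (ℝ × ℝ)} (hq : q ∉ S) :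
    ((↑) : ℝ → AddCircle π) '' anglesMeeting q S = directionModPi q '' S := by
  ext c
  constructor
  · rintro ⟨θ, ⟨p, ⟨r, rfl⟩, hpS⟩, rfl⟩
    have hr : r ≠ 0 := by rintro rfl; exact hq (by simpa using hpS)
    exact ⟨_, hpS, directionModPi_add_smul q hr θ⟩
  · rintro ⟨p, hpS, rfl⟩
    set z := equivRealProdCLM.symm (p - q)
    refine ⟨arg z, ⟨p, ⟨‖z‖, ?_⟩, hpS⟩, rfl⟩
    ext <;> simp [norm_mul_cos_arg, norm_mul_sin_arg, z]

theorem isConnected_image_anglesMeeting (q : ℝ × ℝ) {S : Set (ℝ × ℝ)} (hS : IsConnected S) :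
    IsConnected (((↑) : ℝ → AddCircle π) '' anglesMeeting q S) := by
  by_cases hq : q ∈ S
  · rw [anglesMeeting_of_mem hq, image_univ]
    exact isConnected_range QuotientAddGroup.continuous_mk
  · rw [image_anglesMeeting_of_notMem hq]
    exact hS.image _ fun p hp =>
      (continuousAt_directionModPi (ne_of_mem_of_not_mem hp hq)).continuousWithinAt

/-- for a point `q` and a segment `σ` in ℝ², the set of angles `θ` such
that the line through `q` with direction angle `θ` meets `σ` is `π`-periodic, and its
image in the circle `AddCircle π` is connected. -/
theorem stmt_12 (q x y : ℝ × ℝ) :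
    (∀ θ : ℝ, θ + Real.pi ∈
        {θ : ℝ | (lineThrough2 q (Real.cos θ, Real.sin θ) ∩ segment ℝ x y).Nonempty} ↔
      θ ∈ {θ : ℝ | (lineThrough2 q (Real.cos θ, Real.sin θ) ∩ segment ℝ x y).Nonempty}) ∧
    IsConnected ((fun θ : ℝ => (θ : AddCircle Real.pi)) ''
      {θ : ℝ | (lineThrough2 q (Real.cos θ, Real.sin θ) ∩ segment ℝ x y).Nonempty}) :=
  ⟨add_pi_mem_anglesMeeting_iff q _,
    isConnected_image_anglesMeeting q <|
      (convex_segment x y).isConnected ⟨x, left_mem_segment ℝ x y⟩⟩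
end
end

section
/- Let q ∈ ℝ² and let σ₁, …, σ_m be closed line segments in ℝ². Let A ⊆ AddCircle π be the image under the quotient map ℝ → AddCircle π of the set {θ ∈ ℝ : the line {q + r • (cos θ, sin θ) : r ∈ ℝ} meets every σᵢ} (this set is invariant under θ ↦ θ + π). Then A has at most m connected components: either A is empty, or there exist points θ₁, …, θ_m ∈ A such that every point of A lies in the connected component within A of some θⱼ. -/
/-!
For a segment not containing `q`, the directions of the lines through `q` that meet it form a
closed arc of `ℝ ⧸ πℤ`, the image of the segment under a continuous angle function; for a segment
containing `q` they form the whole circle. So `A` is an intersection of `m` closed arcs. Cut the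
circle at the left end `c` of one arc: on `[c, c + π)` every arc is an initial interval together
with an interval starting at its left end, so `θ ↦ #{arcs whose left end is ≤ θ}` takes values in
`1, …, m` on the lifted intersection and each of its level sets there is an interval.
-/

open Set

noncomputable section

open Real

/-- The preimage in `ℝ` of the image of `Icc a b` in `ℝ ⧸ pℤ`. -/
def periodicIcc (p a b : ℝ) : Set ℝ :=
  {θ | ∃ k : ℤ, θ - k * p ∈ Icc a b}

section PeriodicIcc

variable {p a b θ : ℝ}

lemma sub_int_mul_mem_periodicIcc (h : θ ∈ periodicIcc p a b) (n : ℤ) :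
    θ - n * p ∈ periodicIcc p a b := by
  obtain ⟨k, hk⟩ := h
  exact ⟨k - n, by push_cast; convert hk using 1; ring⟩

lemma periodicIcc_sub_int_mul (n : ℤ) :
    periodicIcc p (a - n * p) (b - n * p) = periodicIcc p a b := by
  ext θ
  constructor <;> rintro ⟨k, h₁, h₂⟩
  · exact ⟨k - n, by push_cast; linarith, by push_cast; linarith⟩
  · exact ⟨k + n, by push_cast; linarith, by push_cast; linarith⟩

lemma toIcoMod_eq_sub_int_mul (hp : 0 < p) (c θ : ℝ) :
    toIcoMod hp c θ = θ - toIcoDiv hp c θ * p := by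
  rw [← zsmul_eq_mul, ← self_sub_toIcoMod hp c θ, sub_sub_cancel]

lemma periodicIcc_eq_univ (hp : 0 < p) (a : ℝ) : periodicIcc p a (a + p) = univ :=
  eq_univ_of_forall fun θ => ⟨toIcoDiv hp a θ,
    toIcoMod_eq_sub_int_mul hp a θ ▸ Ico_subset_Icc_self (toIcoMod_mem_Ico hp a θ)⟩

/-- Within a window `[c, c + p)` containing `α`, `periodicIcc p α β` meets each of `[c, α)` and
`[α, c + p)` in an initial segment. -/
lemma mem_periodicIcc_of_le (hp : 0 < p) {c α β η : ℝ} (hα : α ∈ Ico c (c + p))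
    (hθ : θ < c + p) (hη : c ≤ η) (hle : η ≤ θ) (hside : α ≤ θ → α ≤ η)
    (h : θ ∈ periodicIcc p α β) : η ∈ periodicIcc p α β := by
  obtain ⟨k, hk₁, hk₂⟩ := h
  have hk : k ≤ 0 := by
    by_contra! hk
    have : (1 : ℝ) * p ≤ k * p := mul_le_mul_of_nonneg_right (by exact_mod_cast hk) hp.le
    linarith [hα.1]
  refine ⟨k, ?_, by linarith⟩
  rcases hk.lt_or_eq with hk | rfl
  · have : (k : ℝ) * p ≤ -1 * p :=
      mul_le_mul_of_nonneg_right (by exact_mod_cast Int.le_sub_one_of_lt hk) hp.le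
    linarith [hα.2]
  · simpa using hside (by simpa using hk₁)

end PeriodicIcc

lemma AddCircle.coe_toIcoMod {p : ℝ} (hp : 0 < p) (c θ : ℝ) :
    ((toIcoMod hp c θ : ℝ) : AddCircle p) = θ := by
  rw [toIcoMod_eq_sub_int_mul, QuotientAddGroup.mk_sub, ← zsmul_eq_mul, AddCircle.coe_zsmul,
    AddCircle.coe_period, smul_zero, sub_zero]

lemma exists_ordConnected_cover_inter_periodicIcc {p : ℝ} (hp : 0 < p) {m : ℕ}
    (α β : Fin m → ℝ) (i₀ : Fin m) (hα : ∀ i, α i ∈ Ico (α i₀) (α i₀ + p)) :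
    ∃ P : Fin m → Set ℝ, (∀ j, (P j).OrdConnected) ∧
      ⋃ j, P j = {θ ∈ Ico (α i₀) (α i₀ + p) | ∀ i, θ ∈ periodicIcc p (α i) (β i)} := by
  classical
  set B := {θ ∈ Ico (α i₀) (α i₀ + p) | ∀ i, θ ∈ periodicIcc p (α i) (β i)}
  -- the pieces are the level sets in `B` of the number of left endpoints already passed
  let passed : ℝ → Finset (Fin m) := fun θ => {i | α i ≤ θ}
  have passed_mono : Monotone passed := fun θ θ' h i hi => by
    simp only [passed, Finset.mem_filter, Finset.mem_univ, true_and] at hi ⊢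
    exact hi.trans h
  refine ⟨fun j => {θ ∈ B | (passed θ).card = j + 1}, fun j => ⟨?_⟩, ?_⟩
  · rintro θ ⟨hθB, hθ⟩ θ' ⟨hθ'B, hθ'⟩ η ⟨h₁, h₂⟩
    have hη : (passed η).card = j + 1 := le_antisymm
      (hθ' ▸ Finset.card_le_card (passed_mono h₂)) (hθ ▸ Finset.card_le_card (passed_mono h₁))
    have hsame : passed η = passed θ' :=
      Finset.eq_of_subset_of_card_le (passed_mono h₂) (by rw [hη, hθ'])
    refine ⟨⟨⟨hθB.1.1.trans h₁, h₂.trans_lt hθ'B.1.2⟩, fun i => ?_⟩, hη⟩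
    refine mem_periodicIcc_of_le hp (hα i) hθ'B.1.2 (hθB.1.1.trans h₁) h₂ (fun hi => ?_) (hθ'B.2 i)
    have : i ∈ passed θ' := by simpa [passed] using hi
    simpa [passed, ← hsame] using this
  · ext θ
    simp only [mem_iUnion, mem_ofPred_eq]
    refine ⟨fun ⟨_, hθ, _⟩ => hθ, fun hθ => ?_⟩
    have hpos : 0 < (passed θ).card := Finset.card_pos.2 ⟨i₀, by simpa [passed] using hθ.1.1⟩
    have hle : (passed θ).card ≤ m := (Finset.card_le_univ _).trans_eq (Fintype.card_fin m)
    exact ⟨⟨(passed θ).card - 1, by omega⟩, hθ, by dsimp only; omega⟩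

lemma eq_empty_or_exists_connectedComponentIn_of_subset_iUnion {X ι : Type*}
    [TopologicalSpace X] {A : Set X} {P : ι → Set X} (hP : ∀ j, IsPreconnected (P j))
    (hPA : ∀ j, P j ⊆ A) (hAP : A ⊆ ⋃ j, P j) :
    A = ∅ ∨ ∃ θ : ι → X, (∀ j, θ j ∈ A) ∧ ∀ ξ ∈ A, ∃ j, ξ ∈ connectedComponentIn A (θ j) := by
  classical
  rcases A.eq_empty_or_nonempty with hA | ⟨ξ₀, hξ₀⟩
  · exact Or.inl hA
  refine Or.inr ⟨fun j => if h : (P j).Nonempty then h.some else ξ₀, fun j => ?_, fun ξ hξ => ?_⟩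
  · dsimp only
    split_ifs with h
    exacts [hPA j h.some_mem, hξ₀]
  · obtain ⟨j, hj⟩ := mem_iUnion.1 (hAP hξ)
    refine ⟨j, ?_⟩
    dsimp only
    rw [dif_pos ⟨ξ, hj⟩]
    exact (hP j).subset_connectedComponentIn (Nonempty.some_mem _) (hPA j) hj

theorem eq_empty_or_exists_connectedComponentIn_image_periodicIcc {p : ℝ} (hp : 0 < p)
    {m : ℕ} (a b : Fin m → ℝ) (i₀ : Fin m) {A : Set (AddCircle p)}
    (hA : A = (↑) '' {θ : ℝ | ∀ i, θ ∈ periodicIcc p (a i) (b i)}) :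
    A = ∅ ∨ ∃ θ : Fin m → AddCircle p, (∀ j, θ j ∈ A) ∧
      ∀ ξ ∈ A, ∃ j, ξ ∈ connectedComponentIn A (θ j) := by
  set c := a i₀
  set α : Fin m → ℝ := fun i => toIcoMod hp c (a i)
  have hαβ (i : Fin m) : periodicIcc p (α i) (α i + (b i - a i)) = periodicIcc p (a i) (b i) := by
    convert periodicIcc_sub_int_mul (p := p) (a := a i) (b := b i) (toIcoDiv hp c (a i)) using 2
    · exact toIcoMod_eq_sub_int_mul hp c (a i)
    · rw [show α i = _ from toIcoMod_eq_sub_int_mul hp c (a i)]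
      ring
  have hα₀ : α i₀ = c := (toIcoMod_eq_self hp).2 (left_mem_Ico.2 (by linarith))
  have hα (i : Fin m) : α i ∈ Ico (α i₀) (α i₀ + p) := hα₀ ▸ toIcoMod_mem_Ico hp c (a i)
  obtain ⟨P, hP, hPB⟩ := exists_ordConnected_cover_inter_periodicIcc hp α
    (fun i => α i + (b i - a i)) i₀ hα
  simp only [hαβ] at hPB
  subst hA
  refine eq_empty_or_exists_connectedComponentIn_of_subset_iUnion (P := fun j => (↑) '' P j)
    (fun j => (hP j).isPreconnected.image _ (AddCircle.continuous_mk' p).continuousOn)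
    (fun j => image_mono fun θ hθ => (hPB ▸ mem_iUnion_of_mem j hθ :).2) ?_
  rintro _ ⟨θ, hθ, rfl⟩
  have hθ' : toIcoMod hp c θ ∈ ⋃ j, P j := hPB ▸ ⟨hα₀ ▸ toIcoMod_mem_Ico hp c θ,
    fun i => toIcoMod_eq_sub_int_mul hp c θ ▸ sub_int_mul_mem_periodicIcc (hθ i) _⟩
  obtain ⟨j, hj⟩ := mem_iUnion.1 hθ'
  exact mem_iUnion.2 ⟨j, _, hj, AddCircle.coe_toIcoMod hp c θ⟩

lemma mem_lineThrough2_iff {a v z : ℝ × ℝ} : z ∈ lineThrough2 a v ↔ ∃ r : ℝ, z - a = r • v :=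
  exists_congr fun r => by rw [sub_eq_iff_eq_add']

lemma exists_smul_cos_sin_eq_iff {ρ ψ θ : ℝ} (hρ : ρ ≠ 0) :
    (∃ r : ℝ, ρ • (cos ψ, sin ψ) = r • (cos θ, sin θ)) ↔ ∃ k : ℤ, θ - k * π = ψ := by
  obtain ⟨δ, rfl⟩ : ∃ δ, ψ = θ - δ := ⟨θ - ψ, by ring⟩
  have : (∃ r : ℝ, ρ • (cos (θ - δ), sin (θ - δ)) = r • (cos θ, sin θ)) ↔ sin δ = 0 := by
    simp only [Prod.smul_mk, smul_eq_mul, Prod.mk.injEq, cos_sub, sin_sub]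
    constructor
    · rintro ⟨r, h₁, h₂⟩
      apply mul_left_cancel₀ hρ
      linear_combination sin θ * h₁ - cos θ * h₂ - ρ * sin δ * sin_sq_add_cos_sq θ
    · intro h
      exact ⟨ρ * cos δ, by rw [h]; ring, by rw [h]; ring⟩
  rw [this, sin_eq_zero_iff]
  exact exists_congr fun k => by constructor <;> intro h <;> linarith

/-- Rotate the half-plane onto `0 < re`, where `Complex.arg` is continuous. -/
lemma exists_continuousOn_polarAngle (f : ℝ × ℝ →L[ℝ] ℝ) :
    ∃ ψ : ℝ × ℝ → ℝ, ContinuousOn ψ {v | 0 < f v} ∧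
      ∀ v, 0 < f v → ∃ ρ : ℝ, ρ ≠ 0 ∧ v = ρ • (cos (ψ v), sin (ψ v)) := by
  let z : ℝ × ℝ → ℂ := Complex.equivRealProdCLM.symm
  let ω : ℂ := ⟨f (1, 0), -f (0, 1)⟩
  have hre (v : ℝ × ℝ) : (z v * ω).re = f v := by
    have hv : f v = v.1 * f (1, 0) + v.2 * f (0, 1) := by
      rw [← smul_eq_mul, ← smul_eq_mul, ← map_smul, ← map_smul, ← map_add]
      congr 1
      ext <;> simp
    simp [z, ω, Complex.mul_re, hv]
  refine ⟨fun v => Complex.arg (z v * ω) - Complex.arg ω, fun v hv => ?_, fun v hv => ?_⟩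
  · have hslit : z v * ω ∈ Complex.slitPlane := Complex.mem_slitPlane_iff.2 (Or.inl (hre v ▸ hv))
    have hcont : Continuous fun v => z v * ω := by fun_prop
    exact ((Complex.continuousAt_arg hslit).comp (f := fun v => z v * ω)
      hcont.continuousAt).continuousWithinAt.sub continuousWithinAt_const
  · have hzω : z v * ω ≠ 0 := fun h => by simp [← hre, h] at hv
    have hangle : ((Complex.arg (z v * ω) - Complex.arg ω : ℝ) : Angle) = Complex.arg (z v) := by
      rw [Angle.coe_sub, Complex.arg_mul_coe_angle (left_ne_zero_of_mul hzω)
        (right_ne_zero_of_mul hzω), add_sub_cancel_right]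
    refine ⟨‖z v‖, norm_ne_zero_iff.2 (left_ne_zero_of_mul hzω), ?_⟩
    rw [← Angle.cos_coe, ← Angle.sin_coe, hangle, Angle.cos_coe, Angle.sin_coe]
    ext
    · simp [z, Complex.norm_mul_cos_arg]
    · simp [z, Complex.norm_mul_sin_arg]

/-- Hahn–Banach puts the segment in an open half-plane seen from `q`; there the direction
`ψ (v - q)` is continuous, so its values on the segment form a compact interval. -/
lemma exists_setOf_lineThrough2_inter_segment_eq_periodicIcc (q x y : ℝ × ℝ) :
    ∃ a b : ℝ, {θ : ℝ | (lineThrough2 q (cos θ, sin θ) ∩ segment ℝ x y).Nonempty} =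
      periodicIcc π a b := by
  by_cases hq : q ∈ segment ℝ x y
  · refine ⟨0, π, ?_⟩
    have huniv := periodicIcc_eq_univ pi_pos 0
    rw [zero_add] at huniv
    rw [huniv, eq_univ_iff_forall]
    exact fun θ => ⟨q, mem_lineThrough2_iff.2 ⟨0, by simp⟩, hq⟩
  have hcompact : IsCompact (segment ℝ x y) :=
    Path.range_segment x y ▸ isCompact_range (Path.segment x y).continuous
  obtain ⟨f, u, hfq, hfσ⟩ :=
    geometric_hahn_banach_point_closed (convex_segment x y) hcompact.isClosed hq
  have hpos (v : ℝ × ℝ) (hv : v ∈ segment ℝ x y) : 0 < f (v - q) := by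
    rw [map_sub]
    linarith [hfσ v hv]
  obtain ⟨ψ, hψc, hψ⟩ := exists_continuousOn_polarAngle f
  set g : ℝ × ℝ → ℝ := fun v => ψ (v - q)
  have hg : ContinuousOn g (segment ℝ x y) :=
    hψc.comp (continuousOn_id.sub continuousOn_const) hpos
  have himg := eq_Icc_of_connected_compact
    (((convex_segment x y).isConnected ⟨x, left_mem_segment ℝ x y⟩).image _ hg)
    (hcompact.image_of_continuousOn hg)
  refine ⟨sInf (g '' segment ℝ x y), sSup (g '' segment ℝ x y), ?_⟩
  ext θ
  simp only [mem_ofPred_eq, periodicIcc, ← himg, mem_image]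
  constructor
  · rintro ⟨v, hvl, hv⟩
    obtain ⟨ρ, hρ, hvq⟩ := hψ (v - q) (hpos v hv)
    obtain ⟨k, hk⟩ := (exists_smul_cos_sin_eq_iff hρ).1 (hvq ▸ mem_lineThrough2_iff.1 hvl)
    exact ⟨k, v, hv, hk.symm⟩
  · rintro ⟨k, v, hv, hk⟩
    obtain ⟨ρ, hρ, hvq⟩ := hψ (v - q) (hpos v hv)
    exact ⟨v, mem_lineThrough2_iff.2 (hvq ▸ (exists_smul_cos_sin_eq_iff hρ).2 ⟨k, hk.symm⟩), hv⟩

/-- for a point `q` and `m` segments in ℝ², the image `A` in `AddCircle π`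
of the set of angles `θ` whose line through `q` meets every segment has at most `m`
connected components. -/
theorem stmt_13 (m : ℕ) (hm : 1 ≤ m) (q : ℝ × ℝ) (x y : Fin m → ℝ × ℝ)
    (A : Set (AddCircle Real.pi))
    (hA : A = (fun θ : ℝ => (θ : AddCircle Real.pi)) ''
      {θ : ℝ | ∀ i, (lineThrough2 q (Real.cos θ, Real.sin θ) ∩
        segment ℝ (x i) (y i)).Nonempty}) :
    A = ∅ ∨ ∃ θ : Fin m → AddCircle Real.pi, (∀ j, θ j ∈ A) ∧
      ∀ ξ ∈ A, ∃ j, ξ ∈ connectedComponentIn A (θ j) := by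
  choose a b hab using fun i =>
    exists_setOf_lineThrough2_inter_segment_eq_periodicIcc q (x i) (y i)
  refine eq_empty_or_exists_connectedComponentIn_image_periodicIcc pi_pos a b ⟨0, hm⟩ ?_
  rw [hA]
  congr 1
  ext θ
  exact forall_congr' fun i => Set.ext_iff.1 (hab i) θ
end
end

section
/- For every n ≥ 4 there exist n closed line segments in ℝ³, not all contained in a single plane, whose set of transversals has exactly n − 1 connected components: there are transversals T₁, …, T_{n−1} pairwise in distinct connected components of transversals, and every transversal lies in the same connected component as some T_j. -/
open Set

noncomputable section

/-!
The segments lie on lines of one ruling of the hyperboloid `x² + y² - z² = 1`: with `m = n - 1`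
and `β = π / m`, the `k`-th segment (`k < m`; the last one is repeated) lies on the line of the
B-ruling through the point at angle `(2k+1)β + π` of the unit circle. A line meeting three
pairwise skew lines of a ruling meets the quadric in three points, hence lies on it, so every
transversal is a line of the other (A-)ruling, parametrized by an angle `θ`. The lengths of the
segments are chosen so that the A-line at angle `θ` meets the `k`-th segment iff `θ` stays at
distance at least `β / 2` from `(2k+1)β` modulo `2π`. The transversals are thus the A-lines whose
angle lies within `β / 2` of one of the `m` angles `2jβ`. Inside such an arc one slides to its
centre. Along a path of transversals the horizontal direction of the line moves continuously
inside the union of `m` disjoint closed arcs of the unit circle, so it stays in one of them.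
-/

open Real

lemma lineThrough_eq_of_smul {a v c d : ℝ × ℝ × ℝ} {k t : ℝ} (hk : k ≠ 0) (hv : v = k • d)
    (ha : a = c + t • d) : lineThrough a v = lineThrough c d := by
  subst hv ha
  ext p
  constructor
  · rintro ⟨r, rfl⟩
    exact ⟨t + r * k, by module⟩
  · rintro ⟨r, rfl⟩
    refine ⟨(r - t) / k, ?_⟩
    rw [smul_smul, add_assoc, ← add_smul, div_mul_cancel₀ _ hk, add_sub_cancel]

lemma exists_smul_eq_of_lineThrough_eq_s14 {a v c d : ℝ × ℝ × ℝ}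
    (h : lineThrough a v = lineThrough c d) : ∃ k : ℝ, v = k • d := by
  obtain ⟨r₀, h₀⟩ : a ∈ lineThrough c d := h ▸ ⟨0, by simp⟩
  obtain ⟨r₁, h₁⟩ : a + v ∈ lineThrough c d := h ▸ ⟨1, by simp⟩
  refine ⟨r₁ - r₀, ?_⟩
  calc v = (a + v) - a := by abel
    _ = (r₁ - r₀) • d := by rw [h₁, h₀]; module

lemma segment_sub_smul_add_smul {P d : ℝ × ℝ × ℝ} {N : ℝ} (hN : 0 ≤ N) :
    segment ℝ (P - N • d) (P + N • d) = (fun s : ℝ => P + s • d) '' Icc (-N) N := by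
  have hf : ∀ s : ℝ, AffineMap.lineMap P (P + d) s = P + s • d := fun s => by
    rw [AffineMap.lineMap_apply, vsub_eq_sub, vadd_eq_add, add_sub_cancel_left, add_comm]
  rw [← segment_eq_Icc (by linarith), ← funext hf, image_segment, hf, hf, neg_smul,
    ← sub_eq_add_neg]

lemma exists_abs_sub_int_mul_two_pi_le_pi (u : ℝ) : ∃ l : ℤ, |u - l * (2 * π)| ≤ π := by
  refine ⟨round (u / (2 * π)), ?_⟩
  have h := abs_sub_round (u / (2 * π))
  have h2π : 0 < 2 * π := by positivity
  rw [show u - round (u / (2 * π)) * (2 * π) = (u / (2 * π) - round (u / (2 * π))) * (2 * π) by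
    field_simp, abs_mul, abs_of_pos h2π]
  nlinarith

lemma cos_eq_cos_abs_sub_int_mul_two_pi (u : ℝ) (l : ℤ) : cos u = cos |u - l * (2 * π)| := by
  rw [cos_abs, cos_sub_int_mul_two_pi]

lemma cos_le_cos_iff_exists {b u : ℝ} (hb₀ : 0 ≤ b) (hbπ : b ≤ π) :
    cos b ≤ cos u ↔ ∃ l : ℤ, |u - l * (2 * π)| ≤ b := by
  constructor
  · intro h
    obtain ⟨l, hl⟩ := exists_abs_sub_int_mul_two_pi_le_pi u
    refine ⟨l, (strictAntiOn_cos.le_iff_ge ⟨hb₀, hbπ⟩ ⟨abs_nonneg _, hl⟩).1 ?_⟩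
    rwa [← cos_eq_cos_abs_sub_int_mul_two_pi]
  · rintro ⟨l, hl⟩
    rw [cos_eq_cos_abs_sub_int_mul_two_pi u l]
    exact strictAntiOn_cos.antitoneOn ⟨abs_nonneg _, hl.trans hbπ⟩ ⟨hb₀, hbπ⟩ hl

lemma cos_le_cos_iff_forall {b u : ℝ} (hb₀ : 0 ≤ b) (hbπ : b ≤ π) :
    cos u ≤ cos b ↔ ∀ l : ℤ, b ≤ |u - l * (2 * π)| := by
  constructor
  · intro h l
    by_contra! hl
    rw [cos_eq_cos_abs_sub_int_mul_two_pi u l] at h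
    exact h.not_gt (strictAntiOn_cos ⟨abs_nonneg _, hl.le.trans hbπ⟩ ⟨hb₀, hbπ⟩ hl)
  · intro h
    obtain ⟨l, hl⟩ := exists_abs_sub_int_mul_two_pi_le_pi u
    rw [cos_eq_cos_abs_sub_int_mul_two_pi u l]
    exact strictAntiOn_cos.antitoneOn ⟨hb₀, hbπ⟩ ⟨abs_nonneg _, hl⟩ (h l)

lemma exists_cos_sin_eq {x y : ℝ} (h : x ^ 2 + y ^ 2 = 1) : ∃ θ : ℝ, cos θ = x ∧ sin θ = y := by
  obtain ⟨θ, hθ⟩ := (Complex.norm_eq_one_iff ⟨x, y⟩).1 (by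
    rw [Complex.norm_eq_sqrt_sq_add_sq, h, Real.sqrt_one])
  refine ⟨θ, ?_, ?_⟩
  · simpa using congrArg Complex.re hθ
  · simpa using congrArg Complex.im hθ

def circlePt (θ : ℝ) : ℝ × ℝ × ℝ := (cos θ, sin θ, 0)

def dirA (θ : ℝ) : ℝ × ℝ × ℝ := (-sin θ, cos θ, 1)

def dirB (θ : ℝ) : ℝ × ℝ × ℝ := (-sin θ, cos θ, -1)

def rulingA (θ : ℝ) : Set (ℝ × ℝ × ℝ) := lineThrough (circlePt θ) (dirA θ)

def rulingB (θ : ℝ) : Set (ℝ × ℝ × ℝ) := lineThrough (circlePt θ) (dirB θ)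

def hyperboloidForm (p : ℝ × ℝ × ℝ) : ℝ := p.1 ^ 2 + p.2.1 ^ 2 - p.2.2 ^ 2 - 1

lemma hyperboloidForm_eq_zero_of_mem_rulingB {φ : ℝ} {p : ℝ × ℝ × ℝ} (hp : p ∈ rulingB φ) :
    hyperboloidForm p = 0 := by
  obtain ⟨s, rfl⟩ := hp
  simp only [hyperboloidForm, circlePt, dirB, Prod.smul_mk, Prod.mk_add_mk, smul_eq_mul]
  linear_combination (1 + s ^ 2) * sin_sq_add_cos_sq φ

lemma circlePt_eq_of_mem_rulingB {φ φ' : ℝ} {p : ℝ × ℝ × ℝ} (hp : p ∈ rulingB φ)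
    (hp' : p ∈ rulingB φ') : circlePt φ = circlePt φ' := by
  obtain ⟨s, rfl⟩ := hp
  obtain ⟨s', h⟩ := hp'
  simp only [circlePt, dirB, Prod.smul_mk, Prod.mk_add_mk, smul_eq_mul, Prod.mk.injEq] at h ⊢
  obtain ⟨h₁, h₂, h₃⟩ := h
  obtain rfl : s = s' := by linarith
  have hs : 1 + s ^ 2 ≠ 0 := by positivity
  have hc : (cos φ - cos φ') * (1 + s ^ 2) = 0 := by linear_combination h₁ + s * h₂
  have hs' : (sin φ - sin φ') * (1 + s ^ 2) = 0 := by linear_combination h₂ - s * h₁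
  exact ⟨sub_eq_zero.1 ((mul_eq_zero.1 hc).resolve_right hs),
    sub_eq_zero.1 ((mul_eq_zero.1 hs').resolve_right hs), trivial⟩

lemma eq_zero_of_three_roots {A B C r₀ r₁ r₂ : ℝ} (h₀₁ : r₀ ≠ r₁) (h₀₂ : r₀ ≠ r₂)
    (h₁₂ : r₁ ≠ r₂) (e₀ : A * r₀ ^ 2 + B * r₀ + C = 0) (e₁ : A * r₁ ^ 2 + B * r₁ + C = 0)
    (e₂ : A * r₂ ^ 2 + B * r₂ + C = 0) : A = 0 ∧ B = 0 ∧ C = 0 := by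
  have k₀₁ : A * (r₀ + r₁) + B = 0 :=
    mul_left_cancel₀ (sub_ne_zero.2 h₀₁) (by linear_combination e₀ - e₁)
  have k₀₂ : A * (r₀ + r₂) + B = 0 :=
    mul_left_cancel₀ (sub_ne_zero.2 h₀₂) (by linear_combination e₀ - e₂)
  have hA : A = 0 := mul_left_cancel₀ (sub_ne_zero.2 h₁₂) (by linear_combination k₀₁ - k₀₂)
  subst hA
  exact ⟨rfl, by linarith, by linear_combination e₀ - r₀ * k₀₁⟩

lemma eq_or_eq_neg_of_orthogonal {x y u t : ℝ} (hxy : x ^ 2 + y ^ 2 = 1)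
    (hut : u ^ 2 + t ^ 2 = 1) (h : x * u + y * t = 0) :
    (u = -y ∧ t = x) ∨ (u = y ∧ t = -x) := by
  set d := x * t - y * u
  have hu : u = -y * d := by linear_combination x * h - u * hxy
  have ht : t = x * d := by linear_combination y * h - t * hxy
  have hd : (d - 1) * (d + 1) = 0 := by
    linear_combination (u ^ 2 + t ^ 2) * hxy + hut - (x * u + y * t) * h
  rcases mul_eq_zero.1 hd with hd | hd
  · exact .inl ⟨by linear_combination hu - y * hd, by linear_combination ht + x * hd⟩
  · exact .inr ⟨by linear_combination hu - y * hd, by linear_combination ht + x * hd⟩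

lemma hyperboloidForm_add_smul (a v : ℝ × ℝ × ℝ) (r : ℝ) :
    hyperboloidForm (a + r • v) = (v.1 ^ 2 + v.2.1 ^ 2 - v.2.2 ^ 2) * r ^ 2
      + 2 * (a.1 * v.1 + a.2.1 * v.2.1 - a.2.2 * v.2.2) * r + hyperboloidForm a := by
  simp only [hyperboloidForm, Prod.fst_add, Prod.snd_add, Prod.smul_fst, Prod.smul_snd,
    smul_eq_mul]
  ring

lemma hyperboloidForm_add_smul_eq_zero_of_three {a v : ℝ × ℝ × ℝ} {r₀ r₁ r₂ : ℝ}
    (h₀₁ : r₀ ≠ r₁) (h₀₂ : r₀ ≠ r₂) (h₁₂ : r₁ ≠ r₂) (e₀ : hyperboloidForm (a + r₀ • v) = 0)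
    (e₁ : hyperboloidForm (a + r₁ • v) = 0) (e₂ : hyperboloidForm (a + r₂ • v) = 0) (r : ℝ) :
    hyperboloidForm (a + r • v) = 0 := by
  rw [hyperboloidForm_add_smul] at e₀ e₁ e₂ ⊢
  obtain ⟨hA, hB, hC⟩ := eq_zero_of_three_roots h₀₁ h₀₂ h₁₂ e₀ e₁ e₂
  rw [hA, hB, hC]
  ring

lemma exists_eq_rulingA_or_rulingB {a v : ℝ × ℝ × ℝ} (hv : v ≠ 0)
    (h : ∀ r : ℝ, hyperboloidForm (a + r • v) = 0) :
    ∃ θ, lineThrough a v = rulingA θ ∨ lineThrough a v = rulingB θ := by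
  have e (r : ℝ) := hyperboloidForm_add_smul a v r ▸ h r
  obtain ⟨hA, hB, hC⟩ := eq_zero_of_three_roots (r₀ := 0) (r₁ := 1) (r₂ := -1) (by norm_num)
    (by norm_num) (by norm_num) (e 0) (e 1) (e (-1))
  obtain ⟨a₁, a₂, a₃⟩ := a
  obtain ⟨v₁, v₂, v₃⟩ := v
  simp only [hyperboloidForm] at hA hB hC
  have hv₃ : v₃ ≠ 0 := by
    rintro rfl
    have hv₁ : v₁ = 0 := by nlinarith
    have hv₂ : v₂ = 0 := by nlinarith
    exact hv (by rw [hv₁, hv₂]; rfl)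
  -- `w` is the horizontal direction, `(a₁ - a₃ * w₁, a₂ - a₃ * w₂, 0)` the point at height `0`
  set w₁ := v₁ / v₃
  set w₂ := v₂ / v₃
  have hw : w₁ ^ 2 + w₂ ^ 2 = 1 := by
    simp only [w₁, w₂]; field_simp; linear_combination hA
  have hxy : (a₁ - a₃ * w₁) ^ 2 + (a₂ - a₃ * w₂) ^ 2 = 1 := by
    simp only [w₁, w₂]; field_simp; linear_combination v₃ ^ 2 * hC + a₃ ^ 2 * hA - a₃ * v₃ * hB
  have horth : (a₁ - a₃ * w₁) * w₁ + (a₂ - a₃ * w₂) * w₂ = 0 := by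
    simp only [w₁, w₂]; field_simp; linear_combination v₃ * hB / 2 - a₃ * hA
  have hv₁ : v₁ = v₃ * w₁ := by simp only [w₁]; field_simp
  have hv₂ : v₂ = v₃ * w₂ := by simp only [w₂]; field_simp
  obtain ⟨θ, hcos, hsin⟩ := exists_cos_sin_eq hxy
  refine ⟨θ, ?_⟩
  rw [← hcos, ← hsin] at hxy horth
  rcases eq_or_eq_neg_of_orthogonal hxy hw horth with ⟨h₁, h₂⟩ | ⟨h₁, h₂⟩
  · refine .inl (lineThrough_eq_of_smul (k := v₃) (t := a₃) hv₃ ?_ ?_) <;>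
      simp only [dirA, circlePt, Prod.smul_mk, Prod.mk_add_mk, smul_eq_mul, Prod.mk.injEq]
    · exact ⟨by rw [hv₁, h₁], by rw [hv₂, h₂], by ring⟩
    · exact ⟨by linear_combination -hcos + a₃ * h₁, by linear_combination -hsin + a₃ * h₂,
        by ring⟩
  · refine .inr (lineThrough_eq_of_smul (k := -v₃) (t := -a₃) (neg_ne_zero.2 hv₃) ?_ ?_) <;>
      simp only [dirB, circlePt, Prod.smul_mk, Prod.mk_add_mk, smul_eq_mul, Prod.mk.injEq]
    · exact ⟨by rw [hv₁, h₁]; ring, by rw [hv₂, h₂]; ring, by ring⟩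
    · exact ⟨by linear_combination -hcos + a₃ * h₁, by linear_combination -hsin + a₃ * h₂,
        by ring⟩

lemma exists_eq_rulingA_of_meets_rulingB {a v : ℝ × ℝ × ℝ} (hv : v ≠ 0) {φ₀ φ₁ φ₂ : ℝ}
    (h₀₁ : circlePt φ₀ ≠ circlePt φ₁) (h₀₂ : circlePt φ₀ ≠ circlePt φ₂)
    (h₁₂ : circlePt φ₁ ≠ circlePt φ₂) (m₀ : (lineThrough a v ∩ rulingB φ₀).Nonempty)
    (m₁ : (lineThrough a v ∩ rulingB φ₁).Nonempty)
    (m₂ : (lineThrough a v ∩ rulingB φ₂).Nonempty) :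
    ∃ θ, lineThrough a v = rulingA θ := by
  obtain ⟨_, ⟨r₀, rfl⟩, hB₀⟩ := m₀
  obtain ⟨_, ⟨r₁, rfl⟩, hB₁⟩ := m₁
  obtain ⟨_, ⟨r₂, rfl⟩, hB₂⟩ := m₂
  have param_ne : ∀ {r r' φ φ' : ℝ}, a + r • v ∈ rulingB φ → a + r' • v ∈ rulingB φ' →
      circlePt φ ≠ circlePt φ' → r ≠ r' := by
    rintro r r' φ φ' h h' hne rfl
    exact hne (circlePt_eq_of_mem_rulingB h h')
  obtain ⟨θ, hA | hB⟩ := exists_eq_rulingA_or_rulingB hv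
    (hyperboloidForm_add_smul_eq_zero_of_three (param_ne hB₀ hB₁ h₀₁) (param_ne hB₀ hB₂ h₀₂)
      (param_ne hB₁ hB₂ h₁₂) (hyperboloidForm_eq_zero_of_mem_rulingB hB₀)
      (hyperboloidForm_eq_zero_of_mem_rulingB hB₁) (hyperboloidForm_eq_zero_of_mem_rulingB hB₂))
  · exact ⟨θ, hA⟩
  · have h₀ : a + r₀ • v ∈ rulingB θ := hB ▸ ⟨r₀, rfl⟩
    have h₁ : a + r₁ • v ∈ rulingB θ := hB ▸ ⟨r₁, rfl⟩
    exact absurd ((circlePt_eq_of_mem_rulingB h₀ hB₀).symm.trans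
      (circlePt_eq_of_mem_rulingB h₁ hB₁)) h₀₁

lemma add_smul_dirA_eq_add_smul_dirB_iff {θ φ r s : ℝ} :
    circlePt θ + r • dirA θ = circlePt φ + s • dirB φ ↔
      r = -s ∧ s * (1 + cos (θ - φ)) = sin (θ - φ) ∧ s * sin (θ - φ) = 1 - cos (θ - φ) := by
  simp only [circlePt, dirA, dirB, Prod.smul_mk, Prod.mk_add_mk, smul_eq_mul, Prod.mk.injEq,
    cos_sub, sin_sub]
  constructor
  · rintro ⟨h₁, h₂, h₃⟩
    obtain rfl : r = -s := by linarith
    exact ⟨rfl, by linear_combination sin φ * h₁ - cos φ * h₂ - s * sin_sq_add_cos_sq φ,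
      by linear_combination cos φ * h₁ + sin φ * h₂ + sin_sq_add_cos_sq φ⟩
  · rintro ⟨rfl, h₁, h₂⟩
    refine ⟨?_, ?_, by ring⟩
    · linear_combination sin φ * h₁ + cos φ * h₂ - (s * sin θ + cos θ) * sin_sq_add_cos_sq φ
    · linear_combination -cos φ * h₁ + sin φ * h₂ + (s * cos θ - sin θ) * sin_sq_add_cos_sq φ

def halfLength (γ : ℝ) : ℝ := √((1 + γ) / (1 - γ))

lemma exists_abs_le_halfLength_iff {γ c S : ℝ} (hγ : -1 < γ) (hγ' : γ < 1)
    (hcS : S ^ 2 + c ^ 2 = 1) :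
    (∃ s, |s| ≤ halfLength γ ∧ s * (1 + c) = S ∧ s * S = 1 - c) ↔ -γ ≤ c := by
  have hN : ∀ x : ℝ, x ^ 2 ≤ (1 + γ) / (1 - γ) ↔ x ^ 2 * (1 - γ) ≤ 1 + γ := fun x =>
    le_div_iff₀ (sub_pos.2 hγ')
  constructor
  · rintro ⟨s, hs, h₁, h₂⟩
    have hs2 : s ^ 2 * (1 - γ) ≤ 1 + γ := (hN s).1 (by
      have h₀ : 0 ≤ (1 + γ) / (1 - γ) := div_nonneg (by linarith) (by linarith)
      simpa [halfLength, sq_abs, Real.sq_sqrt h₀] using pow_le_pow_left₀ (abs_nonneg s) hs 2)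
    have hsc : s ^ 2 * (1 + c) = 1 - c := by linear_combination s * h₁ + h₂
    by_contra! hc
    nlinarith [sq_nonneg s]
  · intro hc
    have hc' : 0 < 1 + c := by linarith
    refine ⟨S / (1 + c), Real.abs_le_sqrt ((hN _).2 ?_), by field_simp, ?_⟩
    · rw [div_pow, div_mul_eq_mul_div, div_le_iff₀ (by positivity)]
      nlinarith
    · field_simp
      linear_combination hcS

def segB (φ N : ℝ) : Set (ℝ × ℝ × ℝ) :=
  segment ℝ (circlePt φ - N • dirB φ) (circlePt φ + N • dirB φ)

lemma segB_subset_rulingB {φ N : ℝ} (hN : 0 ≤ N) : segB φ N ⊆ rulingB φ := by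
  rw [segB, segment_sub_smul_add_smul hN]
  rintro _ ⟨s, -, rfl⟩
  exact ⟨s, rfl⟩

lemma rulingA_inter_segB_nonempty_iff {γ θ φ : ℝ} (hγ : -1 < γ) (hγ' : γ < 1) :
    (rulingA θ ∩ segB φ (halfLength γ)).Nonempty ↔ -γ ≤ cos (θ - φ) := by
  rw [← exists_abs_le_halfLength_iff hγ hγ' (sin_sq_add_cos_sq _), segB,
    segment_sub_smul_add_smul (N := halfLength γ) (Real.sqrt_nonneg _)]
  constructor
  · rintro ⟨_, ⟨r, rfl⟩, s, hs, hrs⟩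
    obtain ⟨-, h₁, h₂⟩ := add_smul_dirA_eq_add_smul_dirB_iff.1 hrs.symm
    exact ⟨s, abs_le.2 hs, h₁, h₂⟩
  · rintro ⟨s, hs, h₁, h₂⟩
    exact ⟨_, ⟨-s, rfl⟩, s, abs_le.1 hs, (add_smul_dirA_eq_add_smul_dirB_iff.2 ⟨rfl, h₁, h₂⟩).symm⟩

/-- The shift by `π` turns the meeting condition `-γ ≤ cos (θ - φ)` into
`cos (θ - (2k+1)π/m) ≤ γ`. -/
def segAngle (m k : ℕ) : ℝ := (2 * k + 1) * (π / m) + π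

def seg (m k : ℕ) : Set (ℝ × ℝ × ℝ) := segB (segAngle m k) (halfLength (cos (π / m / 2)))

def NearEvenMultiple (β θ : ℝ) : Prop := ∃ j : ℤ, |θ - 2 * j * β| ≤ β / 2

lemma nearEvenMultiple_two_mul {β : ℝ} (hβ : 0 ≤ β) (j : ℕ) :
    NearEvenMultiple β (2 * j * β) :=
  ⟨j, by simp only [Int.cast_natCast, sub_self, abs_zero]; positivity⟩

lemma cos_half_step_mem {m : ℕ} (hm : 0 < m) : -1 < cos (π / m / 2) ∧ cos (π / m / 2) < 1 := by
  have hβ : 0 < π / m := div_pos pi_pos (Nat.cast_pos.2 hm)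
  have hβπ : π / m ≤ π := div_le_self pi_pos.le (Nat.one_le_cast.2 hm)
  constructor
  · linarith [cos_nonneg_of_mem_Icc (x := π / m / 2) ⟨by linarith, by linarith⟩]
  · simpa using strictAntiOn_cos ⟨le_rfl, pi_pos.le⟩ ⟨by positivity, by linarith⟩ (half_pos hβ)

lemma rulingA_inter_seg_nonempty_iff {m : ℕ} (hm : 0 < m) (θ : ℝ) (k : ℕ) :
    (rulingA θ ∩ seg m k).Nonempty ↔
      ∀ l : ℤ, π / m / 2 ≤ |θ - (2 * ((k + m * l : ℤ) : ℝ) + 1) * (π / m)| := by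
  have hβ : 0 < π / m := div_pos pi_pos (Nat.cast_pos.2 hm)
  have hβπ : π / m ≤ π := div_le_self pi_pos.le (Nat.one_le_cast.2 hm)
  obtain ⟨hγ', hγ⟩ := cos_half_step_mem hm
  have hshift (l : ℤ) : θ - (2 * k + 1) * (π / m) - l * (2 * π) =
      θ - (2 * ((k + m * l : ℤ) : ℝ) + 1) * (π / m) := by
    push_cast
    field_simp
    ring
  rw [seg, rulingA_inter_segB_nonempty_iff hγ' hγ, segAngle, ← sub_sub, cos_sub_pi, neg_le_neg_iff,
    cos_le_cos_iff_forall (by linarith) (by linarith)]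
  simp only [hshift]

lemma forall_odd_iff_nearEvenMultiple {β θ : ℝ} (hβ : 0 < β) :
    (∀ o : ℤ, β / 2 ≤ |θ - (2 * o + 1) * β|) ↔ NearEvenMultiple β θ := by
  constructor
  · intro h
    set j := round (θ / (2 * β))
    have hj : |θ - 2 * j * β| ≤ β := by
      have := abs_sub_round (θ / (2 * β))
      rw [show θ - 2 * j * β = (θ / (2 * β) - j) * (2 * β) by field_simp, abs_mul,
        abs_of_pos (by linarith : 0 < 2 * β)]
      nlinarith
    obtain ⟨hj₁, hj₂⟩ := abs_le.1 hj
    refine ⟨j, abs_le.2 ⟨?_, ?_⟩⟩ <;> by_contra! hlt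
    · have := h (j - 1)
      push_cast at this
      rw [abs_of_nonneg (by linarith)] at this
      linarith
    · have := h j
      rw [abs_of_nonpos (by linarith)] at this
      linarith
  · rintro ⟨j, hj⟩ o
    have hodd : (1 : ℝ) ≤ |((2 * (j - o) - 1 : ℤ) : ℝ)| := by
      exact_mod_cast Int.one_le_abs (by omega)
    have hfar : β ≤ |2 * j * β - (2 * o + 1) * β| := by
      rw [show 2 * j * β - (2 * o + 1) * β = ((2 * (j - o) - 1 : ℤ) : ℝ) * β by push_cast; ring,
        abs_mul, abs_of_pos hβ]
      nlinarith
    have := abs_sub_le (2 * j * β) θ ((2 * o + 1) * β)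
    rw [abs_sub_comm θ] at hj
    linarith

lemma forall_rulingA_inter_seg_nonempty_iff {m : ℕ} (hm : 0 < m) (θ : ℝ) :
    (∀ k < m, (rulingA θ ∩ seg m k).Nonempty) ↔ NearEvenMultiple (π / m) θ := by
  rw [← forall_odd_iff_nearEvenMultiple (div_pos pi_pos (Nat.cast_pos.2 hm))]
  simp only [rulingA_inter_seg_nonempty_iff hm]
  constructor
  · intro h o
    have hmz : (0 : ℤ) < m := by exact_mod_cast hm
    have hk := Int.toNat_of_nonneg (Int.emod_nonneg o hmz.ne')
    have := h (o % m).toNat (by have := Int.emod_lt_of_pos o hmz; omega) (o / m)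
    rwa [hk, Int.emod_add_mul_ediv] at this
  · intro h k _ l
    exact h _

lemma dirA_ne_zero (θ : ℝ) : dirA θ ≠ 0 := fun h => by
  simpa [dirA] using congrArg (·.2.2) h

lemma circlePt_segAngle_ne {m k k' : ℕ} (hkk' : k < k') (hk' : k' < m) :
    circlePt (segAngle m k) ≠ circlePt (segAngle m k') := by
  intro h
  simp only [circlePt, Prod.mk.injEq] at h
  have hm : (0 : ℝ) < m := by exact_mod_cast (by omega : 0 < m)
  have hkm : (k' : ℝ) < m + k := by exact_mod_cast (by omega : k' < m + k)
  have hlt : ((k' : ℝ) - k) * (2 * (π / m)) < 2 * π :=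
    calc ((k' : ℝ) - k) * (2 * (π / m)) = (k' - k) / m * (2 * π) := by ring
      _ < 1 * (2 * π) := by gcongr; rw [div_lt_one hm]; linarith
      _ = 2 * π := one_mul _
  have hpos : 0 < ((k' : ℝ) - k) * (2 * (π / m)) :=
    mul_pos (by simpa using (by exact_mod_cast hkk' : (k : ℝ) < k')) (by positivity)
  have hcos : cos (((k' : ℝ) - k) * (2 * (π / m))) = 1 := by
    rw [show ((k' : ℝ) - k) * (2 * (π / m)) = segAngle m k' - segAngle m k by
      simp only [segAngle]; ring, cos_sub, h.1, h.2.1, ← sq, ← sq, cos_sq_add_sin_sq]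
  exact hpos.ne' ((cos_eq_one_iff_of_lt_of_lt (by linarith) hlt).1 hcos)

lemma isTransversal_seg_iff {m n : ℕ} (hm : 3 ≤ m) (hmn : m ≤ n) {L : Set (ℝ × ℝ × ℝ)} :
    IsTransversal (fun i : Fin n => seg m (min i (m - 1))) L ↔
      ∃ θ, NearEvenMultiple (π / m) θ ∧ L = rulingA θ := by
  rw [← exists_congr fun θ => and_congr_left fun _ =>
    forall_rulingA_inter_seg_nonempty_iff (by omega) θ]
  constructor
  · rintro ⟨⟨a, v, hv, rfl⟩, hmeet⟩
    have hmeets : ∀ k < m, (lineThrough a v ∩ seg m k).Nonempty := fun k hk => by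
      simpa [show min k (m - 1) = k by omega] using hmeet ⟨k, by omega⟩
    have hB : ∀ k < m, (lineThrough a v ∩ rulingB (segAngle m k)).Nonempty := fun k hk =>
      (hmeets k hk).mono (inter_subset_inter_right _ (segB_subset_rulingB (Real.sqrt_nonneg _)))
    obtain ⟨θ, hθ⟩ := exists_eq_rulingA_of_meets_rulingB hv
      (circlePt_segAngle_ne (by omega) (by omega)) (circlePt_segAngle_ne (by omega) (by omega))
      (circlePt_segAngle_ne (by omega) (by omega))
      (hB 0 (by omega)) (hB 1 (by omega)) (hB 2 (by omega))
    exact ⟨θ, hθ ▸ hmeets, hθ⟩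
  · rintro ⟨θ, hθ, rfl⟩
    exact ⟨⟨_, _, dirA_ne_zero θ, rfl⟩, fun i => hθ _ (by omega)⟩

def det3 (p q r : ℝ × ℝ × ℝ) : ℝ :=
  p.1 * (q.2.1 * r.2.2 - q.2.2 * r.2.1) - p.2.1 * (q.1 * r.2.2 - q.2.2 * r.1)
    + p.2.2 * (q.1 * r.2.1 - q.2.1 * r.1)

lemma det3_eq_zero_of_mem_span {u w p q r : ℝ × ℝ × ℝ} (hp : ∃ a b : ℝ, p = a • u + b • w)
    (hq : ∃ a b : ℝ, q = a • u + b • w) (hr : ∃ a b : ℝ, r = a • u + b • w) :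
    det3 p q r = 0 := by
  obtain ⟨a₁, b₁, rfl⟩ := hp
  obtain ⟨a₂, b₂, rfl⟩ := hq
  obtain ⟨a₃, b₃, rfl⟩ := hr
  simp only [det3, Prod.fst_add, Prod.snd_add, Prod.smul_fst, Prod.smul_snd, smul_eq_mul]
  ring

lemma det3_smul (c : ℝ) (p q r : ℝ × ℝ × ℝ) :
    det3 (c • p) (c • q) (c • r) = c ^ 3 * det3 p q r := by
  simp only [det3, Prod.smul_fst, Prod.smul_snd, smul_eq_mul]
  ring

lemma det3_dirB (x y z : ℝ) :
    det3 (dirB x) (dirB y) (dirB z) = sin (x - y) + sin (y - z) + sin (z - x) := by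
  simp only [det3, dirB, sin_sub]
  ring

lemma det3_dirB_segAngle_ne_zero {m : ℕ} (hm : 3 ≤ m) :
    det3 (dirB (segAngle m 0)) (dirB (segAngle m 1)) (dirB (segAngle m 2)) ≠ 0 := by
  have hβ3 : π / m ≤ π / 3 :=
    div_le_div_of_nonneg_left pi_pos.le (by norm_num) (by exact_mod_cast hm)
  have hsin : 0 < sin (2 * (π / m)) :=
    sin_pos_of_pos_of_lt_pi (by positivity) (by linarith [pi_pos])
  have hcos : cos (2 * (π / m)) < 1 := by
    simpa using strictAntiOn_cos ⟨le_rfl, pi_pos.le⟩ ⟨by positivity, by linarith [pi_pos]⟩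
      (by positivity : 0 < 2 * (π / m))
  rw [det3_dirB,
    show segAngle m 0 - segAngle m 1 = -(2 * (π / m)) by simp only [segAngle]; push_cast; ring,
    show segAngle m 1 - segAngle m 2 = -(2 * (π / m)) by simp only [segAngle]; push_cast; ring,
    show segAngle m 2 - segAngle m 0 = 2 * (2 * (π / m)) by simp only [segAngle]; push_cast; ring,
    sin_neg, sin_two_mul (2 * (π / m))]
  nlinarith

lemma not_coplanar_seg {m n : ℕ} (hm : 3 ≤ m) (hmn : m ≤ n) :
    ¬ ∃ H, IsPlane H ∧ ∀ i : Fin n, seg m (min i (m - 1)) ⊆ H := by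
  rintro ⟨H, ⟨a, u, w, -, rfl⟩, hsub⟩
  set N := halfLength (cos (π / m / 2))
  have hspan : ∀ k < 3, ∃ r s : ℝ, (2 * N) • dirB (segAngle m k) = r • u + s • w := by
    intro k hk
    have hseg : seg m k ⊆ {p | ∃ r s : ℝ, p = a + r • u + s • w} := by
      simpa [show min k (m - 1) = k by omega] using hsub ⟨k, by omega⟩
    obtain ⟨r₁, s₁, h₁⟩ := hseg (left_mem_segment ℝ _ _)
    obtain ⟨r₂, s₂, h₂⟩ := hseg (right_mem_segment ℝ _ _)
    refine ⟨r₂ - r₁, s₂ - s₁, ?_⟩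
    calc (2 * N) • dirB (segAngle m k)
        = (circlePt (segAngle m k) + N • dirB (segAngle m k))
          - (circlePt (segAngle m k) - N • dirB (segAngle m k)) := by module
      _ = _ := by rw [h₁, h₂]; module
  have hdet := det3_eq_zero_of_mem_span (hspan 0 (by omega)) (hspan 1 (by omega))
    (hspan 2 (by omega))
  obtain ⟨hγ', hγ⟩ := cos_half_step_mem (m := m) (by omega)
  have hN : 0 < N := Real.sqrt_pos.2 (div_pos (by linarith) (by linarith))
  rw [det3_smul, mul_eq_zero] at hdet
  exact hdet.elim (pow_ne_zero 3 (by positivity)) (det3_dirB_segAngle_ne_zero hm)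

theorem IsPreconnected.subset_of_closed_cover {X ι : Type*} [TopologicalSpace X] {s : Set X}
    (hs : IsPreconnected s) {t : Set ι} (ht : t.Finite) {F : ι → Set X}
    (hF : ∀ i ∈ t, IsClosed (F i)) (hcover : s ⊆ ⋃ i ∈ t, F i)
    (hdisj : ∀ i ∈ t, ∀ j ∈ t, i ≠ j → s ∩ (F i ∩ F j) = ∅) {i : ι} (hi : i ∈ t)
    (hsi : (s ∩ F i).Nonempty) : s ⊆ F i := by
  have hrest : IsClosed (⋃ j ∈ t \ {i}, F j) :=
    ht.sdiff.isClosed_biUnion fun j hj => hF j hj.1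
  have hcover' : s ⊆ F i ∪ ⋃ j ∈ t \ {i}, F j := fun x hx => by
    obtain ⟨j, hj, hxj⟩ := mem_iUnion₂.1 (hcover hx)
    by_cases hji : j = i
    · exact .inl (hji ▸ hxj)
    · exact .inr (mem_iUnion₂.2 ⟨j, ⟨hj, hji⟩, hxj⟩)
  have hdisj' : ∀ x ∈ s, x ∈ F i → x ∉ ⋃ j ∈ t \ {i}, F j := fun x hxs hxi hx => by
    obtain ⟨j, ⟨hj, hji⟩, hxj⟩ := mem_iUnion₂.1 hx
    exact (hdisj i hi j hj (Ne.symm hji)).subset ⟨hxs, hxi, hxj⟩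
  refine (isPreconnected_iff_subset_of_disjoint_closed.1 hs _ _ (hF i hi) hrest hcover'
    (eq_empty_of_forall_notMem fun x ⟨hxs, hxi, hx⟩ => hdisj' x hxs hxi hx)).resolve_right
    fun h => ?_
  obtain ⟨x, hxs, hxi⟩ := hsi
  exact hdisj' x hxs hxi (h hxs)

def unitVec (θ : ℝ) : ℝ × ℝ := (cos θ, sin θ)

/-- On the unit circle this is the closed arc of radius `β / 2` around the angle `α`. -/
def nearCap (β α : ℝ) : Set (ℝ × ℝ) := {p | cos (β / 2) ≤ p.1 * cos α + p.2 * sin α}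

lemma isClosed_nearCap (β α : ℝ) : IsClosed (nearCap β α) :=
  isClosed_le continuous_const (by fun_prop)

lemma unitVec_mem_nearCap_iff {m : ℕ} (hm : 0 < m) (θ : ℝ) (r : ℕ) :
    unitVec θ ∈ nearCap (π / m) (2 * r * (π / m)) ↔
      ∃ l : ℤ, |θ - 2 * ((r + m * l : ℤ) : ℝ) * (π / m)| ≤ π / m / 2 := by
  have hβπ : π / m ≤ π := div_le_self pi_pos.le (Nat.one_le_cast.2 hm)
  have hshift (l : ℤ) : θ - 2 * r * (π / m) - l * (2 * π) =
      θ - 2 * ((r + m * l : ℤ) : ℝ) * (π / m) := by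
    push_cast
    field_simp
    ring
  change cos (π / m / 2) ≤ cos θ * cos _ + sin θ * sin _ ↔ _
  rw [← cos_sub, cos_le_cos_iff_exists (by positivity) (by linarith [pi_pos])]
  simp only [hshift]

lemma eq_of_unitVec_mem_nearCap {m : ℕ} (hm : 0 < m) {θ : ℝ} {r r' : ℕ} (hr : r < m)
    (hr' : r' < m) (h : unitVec θ ∈ nearCap (π / m) (2 * r * (π / m)))
    (h' : unitVec θ ∈ nearCap (π / m) (2 * r' * (π / m))) : r = r' := by
  have hβ : 0 < π / m := div_pos pi_pos (Nat.cast_pos.2 hm)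
  obtain ⟨l, hl⟩ := (unitVec_mem_nearCap_iff hm θ r).1 h
  obtain ⟨l', hl'⟩ := (unitVec_mem_nearCap_iff hm θ r').1 h'
  have hidx : (r + m * l : ℤ) = r' + m * l' := by
    have hlt : |((r + m * l : ℤ) : ℝ) - ((r' + m * l' : ℤ) : ℝ)| < 1 := by
      have := abs_sub_le (2 * ((r + m * l : ℤ) : ℝ) * (π / m)) θ
        (2 * ((r' + m * l' : ℤ) : ℝ) * (π / m))
      rw [abs_sub_comm _ θ, ← sub_mul, ← mul_sub, abs_mul, abs_mul, abs_two, abs_of_pos hβ] at this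
      nlinarith
    have hlt' : |(r + m * l : ℤ) - (r' + m * l')| < 1 := by exact_mod_cast hlt
    rw [abs_lt] at hlt'
    omega
  have := congrArg (· % (m : ℤ)) hidx
  simp only [Int.add_mul_emod_self_left] at this
  rw [Int.emod_eq_of_lt (by positivity) (by omega),
    Int.emod_eq_of_lt (by positivity) (by omega)] at this
  exact_mod_cast this

lemma eq_of_isPreconnected_of_nearEvenMultiple {m : ℕ} (hm : 0 < m) {s : Set (ℝ × ℝ)}
    (hs : IsPreconnected s) (hnear : ∀ p ∈ s, ∃ θ, NearEvenMultiple (π / m) θ ∧ p = unitVec θ)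
    {j j' : ℕ} (hj : j < m) (hj' : j' < m) (h : unitVec (2 * j * (π / m)) ∈ s)
    (h' : unitVec (2 * j' * (π / m)) ∈ s) : j = j' := by
  have hself (r : ℕ) : unitVec (2 * r * (π / m)) ∈ nearCap (π / m) (2 * r * (π / m)) :=
    (unitVec_mem_nearCap_iff hm _ r).2 ⟨0, by
      simp only [mul_zero, add_zero, Int.cast_natCast, sub_self, abs_zero]
      positivity⟩
  have hsub : s ⊆ nearCap (π / m) (2 * j * (π / m)) := by
    refine hs.subset_of_closed_cover (F := fun r : ℕ => nearCap (π / m) (2 * r * (π / m)))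
      (finite_Iio m) (fun r _ => isClosed_nearCap _ _) ?_ ?_ hj ⟨_, h, hself j⟩
    · intro p hp
      obtain ⟨θ, ⟨i, hi⟩, rfl⟩ := hnear p hp
      have hmz : (0 : ℤ) < m := by exact_mod_cast hm
      have hi' := Int.toNat_of_nonneg (Int.emod_nonneg i hmz.ne')
      refine mem_iUnion₂.2 ⟨(i % m).toNat, ?_, (unitVec_mem_nearCap_iff hm θ _).2 ⟨i / m, ?_⟩⟩
      · have := Int.emod_lt_of_pos i hmz
        simp only [mem_Iio]
        omega
      · rwa [hi', Int.emod_add_mul_ediv]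
    · intro r hr r' hr' hne
      refine eq_empty_of_forall_notMem fun p ⟨hp, h₁, h₂⟩ => hne ?_
      obtain ⟨θ, -, rfl⟩ := hnear p hp
      exact eq_of_unitVec_mem_nearCap hm hr hr' h₁ h₂
  exact eq_of_unitVec_mem_nearCap hm hj hj' (hsub h') (hself j')

def dirOf (v : ℝ × ℝ × ℝ) : ℝ × ℝ := (v.2.1 / v.2.2, -v.1 / v.2.2)

lemma dirOf_of_lineThrough_eq_rulingA {a v : ℝ × ℝ × ℝ} (hv : v ≠ 0) {θ : ℝ}
    (h : lineThrough a v = rulingA θ) : v.2.2 ≠ 0 ∧ dirOf v = unitVec θ := by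
  obtain ⟨k, rfl⟩ := exists_smul_eq_of_lineThrough_eq_s14 h
  have hk : k ≠ 0 := by
    rintro rfl
    exact hv (zero_smul _ _)
  simp [dirA, dirOf, unitVec, hk]

lemma not_sameComp_seg {m n : ℕ} (hm : 3 ≤ m) (hmn : m ≤ n) {j j' : Fin m} (hne : j ≠ j') :
    ¬ SameComp (fun i : Fin n => seg m (min i (m - 1))) (rulingA (2 * (j : ℕ) * (π / m)))
      (rulingA (2 * (j' : ℕ) * (π / m))) := by
  rintro ⟨a, v, -, hv, hv0, htr, h₀, h₁⟩
  have hline (t : ℝ) (ht : t ∈ Icc (0 : ℝ) 1) :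
      ∃ θ, NearEvenMultiple (π / m) θ ∧ lineThrough (a t) (v t) = rulingA θ :=
    (isTransversal_seg_iff hm hmn).1 ⟨⟨_, _, hv0 t ht, rfl⟩, htr t ht⟩
  have hv₃ (t : ℝ) (ht : t ∈ Icc (0 : ℝ) 1) : (v t).2.2 ≠ 0 := by
    obtain ⟨θ, -, hθ⟩ := hline t ht
    exact (dirOf_of_lineThrough_eq_rulingA (hv0 t ht) hθ).1
  have hcont : ContinuousOn (dirOf ∘ v) (Icc 0 1) :=
    (hv.snd.fst.div hv.snd.snd hv₃).prodMk (hv.fst.neg.div hv.snd.snd hv₃)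
  have h0 : (0 : ℝ) ∈ Icc (0 : ℝ) 1 := ⟨le_rfl, zero_le_one⟩
  have h1 : (1 : ℝ) ∈ Icc (0 : ℝ) 1 := ⟨zero_le_one, le_rfl⟩
  refine hne (Fin.ext (eq_of_isPreconnected_of_nearEvenMultiple (by omega)
    (isPreconnected_Icc.image _ hcont) ?_ j.isLt j'.isLt
    ⟨0, h0, (dirOf_of_lineThrough_eq_rulingA (hv0 0 h0) h₀).2⟩
    ⟨1, h1, (dirOf_of_lineThrough_eq_rulingA (hv0 1 h1) h₁).2⟩))
  rintro _ ⟨t, ht, rfl⟩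
  obtain ⟨θ, hθ, hl⟩ := hline t ht
  exact ⟨θ, hθ, (dirOf_of_lineThrough_eq_rulingA (hv0 t ht) hl).2⟩

lemma sameComp_rulingA {n : ℕ} {s : Fin n → Set (ℝ × ℝ × ℝ)} {θ : ℝ → ℝ} (hθ : Continuous θ)
    (h : ∀ t ∈ Icc (0 : ℝ) 1, ∀ i, (rulingA (θ t) ∩ s i).Nonempty) :
    SameComp s (rulingA (θ 0)) (rulingA (θ 1)) :=
  ⟨fun t => circlePt (θ t), fun t => dirA (θ t), by unfold circlePt; fun_prop,
    by unfold dirA; fun_prop, fun t _ => dirA_ne_zero _, h, rfl, rfl⟩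

lemma rulingA_add_int_mul_two_pi (θ : ℝ) (l : ℤ) : rulingA (θ + l * (2 * π)) = rulingA θ := by
  simp only [rulingA, circlePt, dirA, cos_add_int_mul_two_pi, sin_add_int_mul_two_pi]

lemma exists_sameComp_seg {m n : ℕ} (hm : 3 ≤ m) (hmn : m ≤ n) {L : Set (ℝ × ℝ × ℝ)}
    (hL : IsTransversal (fun i : Fin n => seg m (min i (m - 1))) L) :
    ∃ j : Fin m, SameComp (fun i : Fin n => seg m (min i (m - 1))) L
      (rulingA (2 * (j : ℕ) * (π / m))) := by
  obtain ⟨θ, ⟨i, hi⟩, rfl⟩ := (isTransversal_seg_iff hm hmn).1 hL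
  have hmz : (0 : ℤ) < m := by omega
  have hi' := Int.toNat_of_nonneg (Int.emod_nonneg i hmz.ne')
  refine ⟨⟨(i % m).toNat, by have := Int.emod_lt_of_pos i hmz; omega⟩, ?_⟩
  have hnear (t : ℝ) (ht : t ∈ Icc (0 : ℝ) 1) :
      NearEvenMultiple (π / m) (θ + t * (2 * i * (π / m) - θ)) := by
    refine ⟨i, ?_⟩
    calc |θ + t * (2 * i * (π / m) - θ) - 2 * i * (π / m)|
        = (1 - t) * |θ - 2 * i * (π / m)| := by
          rw [← abs_of_nonneg (sub_nonneg.2 ht.2), ← abs_mul]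
          ring_nf
      _ ≤ 1 * |θ - 2 * i * (π / m)| := by gcongr; linarith [ht.1]
      _ ≤ π / m / 2 := by linarith
  have hpath := sameComp_rulingA (θ := fun t => θ + t * (2 * i * (π / m) - θ)) (by fun_prop)
    fun t ht => ((isTransversal_seg_iff hm hmn).2 ⟨_, hnear t ht, rfl⟩).2
  convert hpath using 1
  · simp only [zero_mul, add_zero]
  · rw [← rulingA_add_int_mul_two_pi _ (i / m)]
    congr 1
    have hcast : (((i % m).toNat : ℕ) : ℝ) = ((i % m : ℤ) : ℝ) := by exact_mod_cast hi'
    have hdiv : ((i % m : ℤ) : ℝ) + m * ((i / m : ℤ) : ℝ) = i := by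
      exact_mod_cast Int.emod_add_mul_ediv i m
    rw [Fin.val_mk, hcast, ← hdiv]
    field_simp
    ring

/-- for every `n ≥ 4` there are `n` segments in ℝ³, not all coplanar, whose
set of transversals has exactly `n − 1` connected components. -/
theorem stmt_14 (n : ℕ) (hn : 4 ≤ n) :
    ∃ x y : Fin n → ℝ × ℝ × ℝ,
      (¬ ∃ H : Set (ℝ × ℝ × ℝ), IsPlane H ∧ ∀ i, segment ℝ (x i) (y i) ⊆ H) ∧
      ∃ T : Fin (n - 1) → Set (ℝ × ℝ × ℝ),
        (∀ j, IsTransversal (fun i => segment ℝ (x i) (y i)) (T j)) ∧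
        (∀ j j', j ≠ j' → ¬ SameComp (fun i => segment ℝ (x i) (y i)) (T j) (T j')) ∧
        ∀ L, IsTransversal (fun i => segment ℝ (x i) (y i)) L →
          ∃ j, SameComp (fun i => segment ℝ (x i) (y i)) L (T j) := by
  have hm : 3 ≤ n - 1 := by omega
  have hmn : n - 1 ≤ n := Nat.sub_le n 1
  refine ⟨fun i => circlePt (segAngle (n - 1) (min i (n - 2)))
      - halfLength (cos (π / (n - 1 : ℕ) / 2)) • dirB (segAngle (n - 1) (min i (n - 2))),
    fun i => circlePt (segAngle (n - 1) (min i (n - 2)))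
      + halfLength (cos (π / (n - 1 : ℕ) / 2)) • dirB (segAngle (n - 1) (min i (n - 2))),
    not_coplanar_seg hm hmn, fun j => rulingA (2 * (j : ℕ) * (π / (n - 1 : ℕ))),
    fun j => (isTransversal_seg_iff hm hmn).2 ⟨_, nearEvenMultiple_two_mul (by positivity) j, rfl⟩,
    fun j j' hne => not_sameComp_seg hm hmn hne, fun L hL => exists_sameComp_seg hm hmn hL⟩
end
end
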